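/- arXiv:2512.13386 — 8 statements merged into one kernel-verified Lean document; each statement's English description precedes it below -/
import Mathlib

section
/- Let (b,e,a) be a weakly eligible triple of splitting types of ranks m, m+n, n. Then the following two conditions are equivalent: (i) for every 1 ≤ μ ≤ m, if there exists 1 ≤ ν' ≤ n with A(μ,ν') < 0 and ν denotes the largest such ν', then S(μ,ν+1) ≥ 0; and for every 1 ≤ ν ≤ n, if there exists 1 ≤ μ' ≤ m with B(μ',ν) < 0 and μ denotes the smallest such μ', then S(μ,ν+1) ≥ 0; (ii) A(μ,ν) ≥ 0 and B(μ,ν) ≥ 0 for all 1 ≤ μ ≤ m and 1 ≤ ν ≤ n with ν ≥ h_μ. -/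
open Finset

/-- Degree of a 1-based integer tuple of rank `n`. -/
def degT (a : ℕ → ℤ) (n : ℕ) : ℤ := ∑ i ∈ Icc 1 n, a i

/-- `a` is weakly increasing on indices `1, …, n` (a splitting type of rank `n`). -/
def Incr (a : ℕ → ℤ) (n : ℕ) : Prop := ∀ i j : ℕ, 1 ≤ i → i ≤ j → j ≤ n → a i ≤ a j

/-- `S(μ,ν) = Σ_{i=ν}^n a_i + Σ_{i=μ}^m b_i − Σ_{i=μ+ν−1}^{m+n} e_i`. -/
def Sfun (b e a : ℕ → ℤ) (m n μ ν : ℕ) : ℤ :=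
  (∑ i ∈ Icc ν n, a i) + (∑ i ∈ Icc μ m, b i) - ∑ i ∈ Icc (μ + ν - 1) (m + n), e i

/-- `A(μ,ν) = a_ν − e_{μ+ν}`. -/
def Afun (e a : ℕ → ℤ) (μ ν : ℕ) : ℤ := a ν - e (μ + ν)

/-- `B(μ,ν) = e_{μ+ν−1} − b_μ`. -/
def Bfun (b e : ℕ → ℤ) (μ ν : ℕ) : ℤ := e (μ + ν - 1) - b μ

/-- `h_μ = min{ν : 1 ≤ ν ≤ n+1, S(μ,ν') < 0 for all ν' with ν < ν' ≤ n+1}`. -/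
noncomputable def hfun (b e a : ℕ → ℤ) (m n μ : ℕ) : ℕ :=
  sInf {ν : ℕ | 1 ≤ ν ∧ ν ≤ n + 1 ∧ ∀ ν', ν < ν' → ν' ≤ n + 1 → Sfun b e a m n μ ν' < 0}

/-- Weak eligibility of a triple `(b,e,a)` of ranks `m, m+n, n`. -/
def WeaklyEligible (b e a : ℕ → ℤ) (m n : ℕ) : Prop :=
  degT a n + degT b m = degT e (m + n) ∧
  (∀ i, 1 ≤ i → i ≤ n → e i ≤ a i) ∧
  (∀ i, 1 ≤ i → i ≤ m → b i ≤ e (n + i))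

/-- The realizability criterion: weakly eligible, and `A(μ,ν) ≥ 0`, `B(μ,ν) ≥ 0`
whenever `1 ≤ μ ≤ m`, `1 ≤ ν ≤ n` and `ν ≥ h_μ`. -/
def RealizCrit (b e a : ℕ → ℤ) (m n : ℕ) : Prop :=
  WeaklyEligible b e a m n ∧
  ∀ μ ν, 1 ≤ μ → μ ≤ m → 1 ≤ ν → ν ≤ n → hfun b e a m n μ ≤ ν →
    0 ≤ Afun e a μ ν ∧ 0 ≤ Bfun b e μ ν

/-- `f ≥ g` in the balancedness partial order (for tuples of rank `n`):
all prefix sums of `f` dominate those of `g`. -/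
def MoreBal (f g : ℕ → ℤ) (n : ℕ) : Prop :=
  ∀ k, k ≤ n → (∑ i ∈ Icc 1 k, g i) ≤ ∑ i ∈ Icc 1 k, f i

/-- `f > g` in the balancedness partial order: `f ≥ g` and `f ≠ g` (on indices `1..n`). -/
def StrictMoreBal (f g : ℕ → ℤ) (n : ℕ) : Prop :=
  MoreBal f g n ∧ ∃ i, 1 ≤ i ∧ i ≤ n ∧ f i ≠ g i

/-- `hom(u,v) = Σ_i Σ_j max(0, v_j − u_i + 1)`, the dimension of
`Hom(O(u), O(v))` on `P¹`. -/
def homT (u : ℕ → ℤ) (p : ℕ) (v : ℕ → ℤ) (q : ℕ) : ℤ :=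
  ∑ i ∈ Icc 1 p, ∑ j ∈ Icc 1 q, max 0 (v j - u i + 1)

section Aux

lemma sum_Icc_bot (f : ℕ → ℤ) (lo hi : ℕ) (h : lo ≤ hi) :
    ∑ i ∈ Icc lo hi, f i = f lo + ∑ i ∈ Icc (lo+1) hi, f i := by
  have hins : Icc lo hi = insert lo (Icc (lo+1) hi) := by
    ext x; simp only [Finset.mem_Icc, Finset.mem_insert]; omega
  rw [hins, Finset.sum_insert (by simp only [Finset.mem_Icc]; omega)]

lemma myI1 (b e a : ℕ → ℤ) (m n μ ν : ℕ) (hμ : 1 ≤ μ) (hμm : μ ≤ m+1)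
    (hν : 1 ≤ ν) (hνn : ν ≤ n) :
    Sfun b e a m n μ ν = Sfun b e a m n μ (ν+1) + (a ν - e (μ+ν-1)) := by
  unfold Sfun
  rw [sum_Icc_bot a ν n hνn, sum_Icc_bot e (μ+ν-1) (m+n) (by omega)]
  have h1 : μ + ν - 1 + 1 = μ + ν := by omega
  have h2 : μ + (ν+1) - 1 = μ + ν := by omega
  rw [h1, h2]; ring

lemma myI2 (b e a : ℕ → ℤ) (m n μ ν : ℕ) (hμ : 1 ≤ μ) (hμm : μ ≤ m)
    (hν : 1 ≤ ν) (hνn : ν ≤ n+1) :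
    Sfun b e a m n μ ν = Sfun b e a m n (μ+1) ν + (b μ - e (μ+ν-1)) := by
  unfold Sfun
  rw [sum_Icc_bot b μ m hμm, sum_Icc_bot e (μ+ν-1) (m+n) (by omega)]
  have h1 : μ + ν - 1 + 1 = μ + 1 + ν - 1 := by omega
  rw [h1]; ring

lemma myS11 (b e a : ℕ → ℤ) (m n : ℕ) (hdeg : degT a n + degT b m = degT e (m+n)) :
    Sfun b e a m n 1 1 = 0 := by
  unfold Sfun
  unfold degT at hdeg
  have h : (1:ℕ) + 1 - 1 = 1 := rfl
  rw [h]; linarith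

lemma hfun_mem (b e a : ℕ → ℤ) (m n μ : ℕ) :
    1 ≤ hfun b e a m n μ ∧ hfun b e a m n μ ≤ n + 1 ∧
    ∀ ν', hfun b e a m n μ < ν' → ν' ≤ n + 1 → Sfun b e a m n μ ν' < 0 := by
  have hmem : (n+1) ∈ {ν : ℕ | 1 ≤ ν ∧ ν ≤ n + 1 ∧
      ∀ ν', ν < ν' → ν' ≤ n + 1 → Sfun b e a m n μ ν' < 0} :=
    ⟨by omega, le_rfl, fun ν' h1 h2 => absurd h2 (by omega)⟩
  exact Nat.sInf_mem ⟨_, hmem⟩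

lemma hfun_min (b e a : ℕ → ℤ) (m n μ k : ℕ) (hk : 1 ≤ k) (hkn : k ≤ n+1)
    (hlt : k < hfun b e a m n μ) :
    ∃ ν', k < ν' ∧ ν' ≤ n + 1 ∧ 0 ≤ Sfun b e a m n μ ν' := by
  have hnm : k ∉ {ν : ℕ | 1 ≤ ν ∧ ν ≤ n + 1 ∧
      ∀ ν', ν < ν' → ν' ≤ n + 1 → Sfun b e a m n μ ν' < 0} := by
    intro hmem
    have := Nat.sInf_le hmem
    unfold hfun at hlt
    omega
  simp only [Set.mem_setOf_eq, not_and, not_forall, not_lt] at hnm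
  obtain ⟨ν', h1, h2, h3⟩ := hnm hk hkn
  exact ⟨ν', h1, h2, h3⟩

lemma hfun_S_nonneg (b e a : ℕ → ℤ) (m n μ : ℕ) (h2 : 2 ≤ hfun b e a m n μ) :
    0 ≤ Sfun b e a m n μ (hfun b e a m n μ) := by
  obtain ⟨h1, hle, hneg⟩ := hfun_mem b e a m n μ
  obtain ⟨ν', hν1, hν2, hν3⟩ := hfun_min b e a m n μ (hfun b e a m n μ - 1)
    (by omega) (by omega) (by omega)
  rcases lt_or_ge (hfun b e a m n μ) ν' with h | h
  · exact absurd (hneg ν' h hν2) (by linarith)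
  · have hq : ν' = hfun b e a m n μ := by omega
    rwa [hq] at hν3

lemma myTdn (b e a : ℕ → ℤ) (m n μ : ℕ) (hμ : 1 ≤ μ) (hμm : μ ≤ m+1) :
    ∀ k d, 1 ≤ d → d + k ≤ n + 1 →
      (∀ t, d ≤ t → t < d + k → e (μ+t-1) ≤ a t) →
      Sfun b e a m n μ (d+k) ≤ Sfun b e a m n μ d := by
  intro k
  induction k with
  | zero => intro d _ _ _; simp
  | succ k IH =>
    intro d hd hdk hterm
    have h1 : Sfun b e a m n μ d = Sfun b e a m n μ (d+1) + (a d - e (μ+d-1)) :=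
      myI1 b e a m n μ d hμ hμm hd (by omega)
    have h2 : Sfun b e a m n μ (d+1+k) ≤ Sfun b e a m n μ (d+1) :=
      IH (d+1) (by omega) (by omega) (fun t ht1 ht2 => hterm t (by omega) (by omega))
    have h3 : e (μ+d-1) ≤ a d := hterm d le_rfl (by omega)
    have h4 : d + (k+1) = d + 1 + k := by omega
    rw [h4]; linarith

lemma lemE (m n : ℕ) (hm : 1 ≤ m) (hn : 1 ≤ n) (b e a : ℕ → ℤ)
    (hb : Incr b m) (he : Incr e (m+n)) (ha : Incr a n) (hwe : WeaklyEligible b e a m n)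
    (hcii : ∀ μ ν, 1 ≤ μ → μ ≤ m → 1 ≤ ν → ν ≤ n → hfun b e a m n μ ≤ ν →
        0 ≤ Afun e a μ ν ∧ 0 ≤ Bfun b e μ ν) :
    ∀ μ, 1 ≤ μ → μ ≤ m → ∀ t, 1 ≤ t → t ≤ hfun b e a m n μ →
      (∀ i, 1 ≤ i → i < μ → 0 ≤ Bfun b e i t) → 0 ≤ Sfun b e a m n μ t := by
  intro μ
  induction μ using Nat.strong_induction_on with
  | _ μ IHμ =>
  intro hμ1 hμm
  have base : ∀ t, 1 ≤ t → t = hfun b e a m n μ →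
      (∀ i, 1 ≤ i → i < μ → 0 ≤ Bfun b e i t) → 0 ≤ Sfun b e a m n μ t := by
    intro t ht1 hteq hB
    rcases Nat.lt_or_ge t 2 with h2 | h2
    · -- t = 1
      have ht : t = 1 := by omega
      subst ht
      rcases Nat.lt_or_ge μ 2 with hμ2 | hμ2
      · have hq : μ = 1 := by omega
        subst hq
        rw [myS11 b e a m n hwe.1]
      · have hprev := IHμ (μ-1) (by omega) (by omega) (by omega) 1 le_rfl
          (hfun_mem b e a m n (μ-1)).1
          (fun i hi1 hi2 => hB i hi1 (by omega))
        have hI2 := myI2 b e a m n (μ-1) 1 (by omega) (by omega) le_rfl (by omega)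
        have hq : μ - 1 + 1 = μ := by omega
        rw [hq] at hI2
        have hBm := hB (μ-1) (by omega) (by omega)
        unfold Bfun at hBm
        rw [hq] at hBm
        linarith
    · rw [hteq]
      exact hfun_S_nonneg b e a m n μ (by omega)
  suffices H : ∀ k t, 1 ≤ t → t ≤ hfun b e a m n μ → hfun b e a m n μ - t ≤ k →
      (∀ i, 1 ≤ i → i < μ → 0 ≤ Bfun b e i t) → 0 ≤ Sfun b e a m n μ t by
    exact fun t ht1 ht2 hB => H _ t ht1 ht2 le_rfl hB
  intro k
  induction k with
  | zero =>
    intro t ht1 ht2 hk hB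
    exact base t ht1 (by omega) hB
  | succ k IHk =>
    intro t ht1 ht2 hk hB
    rcases eq_or_lt_of_le ht2 with heq | hlt
    · exact base t ht1 heq hB
    · have htn : t ≤ n := by
        have := (hfun_mem b e a m n μ).2.1; omega
      have hB' : ∀ i, 1 ≤ i → i < μ → 0 ≤ Bfun b e i (t+1) := by
        intro i hi1 hi2
        have h0 := hB i hi1 hi2
        have hee : e (i+t-1) ≤ e (i+(t+1)-1) := he (i+t-1) (i+(t+1)-1)
          (by omega) (by omega) (by omega)
        unfold Bfun at h0 ⊢
        linarith
      rcases le_or_gt (e (μ+t-1)) (a t) with hcase | hcase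
      · have hstep := myI1 b e a m n μ t hμ1 (by omega) ht1 htn
        have hnext := IHk (t+1) (by omega) (by omega) (by omega) hB'
        linarith
      · have hμ2 : 2 ≤ μ := by
          by_contra h
          have hq : μ = 1 := by omega
          have h1 := hwe.2.1 t ht1 htn
          have h2 : μ + t - 1 = t := by omega
          rw [h2] at hcase
          linarith
        have hhm : t ≤ hfun b e a m n (μ-1) := by
          by_contra h
          push_neg at h
          have hA := (hcii (μ-1) t (by omega) (by omega) ht1 htn (by omega)).1
          unfold Afun at hA
          have hq : μ - 1 + t = μ + t - 1 := by omega
          rw [hq] at hA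
          linarith
        have hprev := IHμ (μ-1) (by omega) (by omega) (by omega) t ht1 hhm
          (fun i hi1 hi2 => hB i hi1 (by omega))
        have hI2 := myI2 b e a m n (μ-1) t (by omega) (by omega) ht1 (by omega)
        have hq : μ - 1 + 1 = μ := by omega
        rw [hq] at hI2
        have hBm := hB (μ-1) (by omega) (by omega)
        unfold Bfun at hBm
        linarith

end Aux

/-- Theorem (realizability conditions, equivalence of Lemma `necc` form and
`A,B ≥ 0 above h_μ` form) for weakly eligible triples. -/
theorem stmt0 (m n : ℕ) (hm : 1 ≤ m) (hn : 1 ≤ n)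
    (b e a : ℕ → ℤ) (hb : Incr b m) (he : Incr e (m + n)) (ha : Incr a n)
    (hwe : WeaklyEligible b e a m n) :
    ((∀ μ ν, 1 ≤ μ → μ ≤ m → 1 ≤ ν → ν ≤ n → Afun e a μ ν < 0 →
        (∀ ν', ν < ν' → ν' ≤ n → 0 ≤ Afun e a μ ν') →
        0 ≤ Sfun b e a m n μ (ν + 1)) ∧
     (∀ μ ν, 1 ≤ μ → μ ≤ m → 1 ≤ ν → ν ≤ n → Bfun b e μ ν < 0 →
        (∀ μ', 1 ≤ μ' → μ' < μ → 0 ≤ Bfun b e μ' ν) →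
        0 ≤ Sfun b e a m n μ (ν + 1))) ↔
    (∀ μ ν, 1 ≤ μ → μ ≤ m → 1 ≤ ν → ν ≤ n → hfun b e a m n μ ≤ ν →
        0 ≤ Afun e a μ ν ∧ 0 ≤ Bfun b e μ ν) := by
  constructor
  · rintro ⟨cA, cB⟩
    -- A-part
    have hApart : ∀ μ ν, 1 ≤ μ → μ ≤ m → 1 ≤ ν → ν ≤ n →
        hfun b e a m n μ ≤ ν → 0 ≤ Afun e a μ ν := by
      intro μ ν h1 h2 h3 h4 h5
      by_contra hneg
      push_neg at hneg
      set T := (Icc 1 n).filter (fun t => Afun e a μ t < 0) with hT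
      have hνT : ν ∈ T := by
        simp only [hT, Finset.mem_filter, Finset.mem_Icc]
        exact ⟨⟨h3, h4⟩, hneg⟩
      have hne : T.Nonempty := ⟨ν, hνT⟩
      set ν' := T.max' hne with hν'
      have hmem := T.max'_mem hne
      rw [← hν'] at hmem
      simp only [hT, Finset.mem_filter, Finset.mem_Icc] at hmem
      have hmax : ∀ t, ν' < t → t ≤ n → 0 ≤ Afun e a μ t := by
        intro t h6 h7
        by_contra h8
        push_neg at h8
        have htT : t ∈ T := by
          simp only [hT, Finset.mem_filter, Finset.mem_Icc]
          exact ⟨⟨by omega, h7⟩, h8⟩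
        have := T.le_max' t htT
        omega
      have hνν' : ν ≤ ν' := T.le_max' ν hνT
      have hS := cA μ ν' h1 h2 hmem.1.1 hmem.1.2 hmem.2 hmax
      have hlt := (hfun_mem b e a m n μ).2.2 (ν'+1) (by omega) (by omega)
      linarith
    -- B-part: core step
    have hBstep : ∀ ν, 1 ≤ ν → ν ≤ n →
        (∀ ν2, ν < ν2 → ν2 ≤ n → ∀ μ2, 1 ≤ μ2 → μ2 ≤ m →
          hfun b e a m n μ2 ≤ ν2 → 0 ≤ Bfun b e μ2 ν2) →
        ∀ μ, 1 ≤ μ → μ ≤ m → hfun b e a m n μ ≤ ν → 0 ≤ Bfun b e μ ν := by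
      intro ν hν1 hνn IHcol μ hμ1 hμm hhν
      by_contra hneg
      push_neg at hneg
      set T1 := (Icc 1 m).filter (fun i => Bfun b e i ν < 0) with hT1
      have hμT1 : μ ∈ T1 := by
        simp only [hT1, Finset.mem_filter, Finset.mem_Icc]
        exact ⟨⟨hμ1, hμm⟩, hneg⟩
      have hne1 : T1.Nonempty := ⟨μ, hμT1⟩
      set μs := T1.min' hne1 with hμsdef
      have hμsmem := T1.min'_mem hne1
      rw [← hμsdef] at hμsmem
      simp only [hT1, Finset.mem_filter, Finset.mem_Icc] at hμsmem
      have hμsμ : μs ≤ μ := T1.min'_le μ hμT1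
      have hminimal : ∀ i, 1 ≤ i → i < μs → 0 ≤ Bfun b e i ν := by
        intro i hi1 hi2
        by_contra h8
        push_neg at h8
        have hiT : i ∈ T1 := by
          simp only [hT1, Finset.mem_filter, Finset.mem_Icc]
          exact ⟨⟨hi1, by omega⟩, h8⟩
        have := T1.min'_le i hiT
        omega
      have hcB := cB μs ν hμsmem.1.1 hμsmem.1.2 hν1 hνn hμsmem.2 hminimal
      have hhμs : ν + 1 ≤ hfun b e a m n μs := by
        by_contra h
        push_neg at h
        have := (hfun_mem b e a m n μs).2.2 (ν+1) (by omega) (by omega)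
        linarith
      set T2 := (Icc 1 μ).filter (fun i => ν + 1 ≤ hfun b e a m n i) with hT2
      have hμsT2 : μs ∈ T2 := by
        simp only [hT2, Finset.mem_filter, Finset.mem_Icc]
        exact ⟨⟨hμsmem.1.1, hμsμ⟩, hhμs⟩
      have hne2 : T2.Nonempty := ⟨μs, hμsT2⟩
      set j := T2.max' hne2 with hjdef
      have hjmem := T2.max'_mem hne2
      rw [← hjdef] at hjmem
      simp only [hT2, Finset.mem_filter, Finset.mem_Icc] at hjmem
      have hjμ : j < μ := by
        rcases Nat.lt_or_ge j μ with h | h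
        · exact h
        · exfalso
          have hq : j = μ := by omega
          rw [hq] at hjmem
          omega
      have hj1 : hfun b e a m n (j+1) ≤ ν := by
        by_contra h
        push_neg at h
        have hjT : (j+1) ∈ T2 := by
          simp only [hT2, Finset.mem_filter, Finset.mem_Icc]
          exact ⟨⟨by omega, by omega⟩, by omega⟩
        have := T2.le_max' _ hjT
        omega
      have hc2 : hfun b e a m n j ≤ n + 1 := (hfun_mem b e a m n j).2.1
      have hBjc : 0 ≤ Bfun b e j (hfun b e a m n j) := by
        rcases eq_or_lt_of_le hc2 with hceq | hclt
        · unfold Bfun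
          have hq : j + hfun b e a m n j - 1 = n + j := by omega
          rw [hq]
          have := hwe.2.2 j hjmem.1.1 (by omega)
          linarith
        · exact IHcol (hfun b e a m n j) (by omega) (by omega) j hjmem.1.1
            (by omega) le_rfl
      have hSjc : 0 ≤ Sfun b e a m n j (hfun b e a m n j) :=
        hfun_S_nonneg b e a m n j (by omega)
      have hI2 := myI2 b e a m n j (hfun b e a m n j) hjmem.1.1 (by omega)
        (by omega) hc2
      have hSj1c : 0 ≤ Sfun b e a m n (j+1) (hfun b e a m n j) := by
        unfold Bfun at hBjc
        linarith
      have htel : Sfun b e a m n (j+1) ((ν+1) + (hfun b e a m n j - (ν+1))) ≤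
          Sfun b e a m n (j+1) (ν+1) := by
        apply myTdn b e a m n (j+1) (by omega) (by omega)
        · omega
        · omega
        · intro t ht1 ht2
          have htn' : t ≤ n := by omega
          have hA := hApart (j+1) t (by omega) (by omega) (by omega) htn' (by omega)
          unfold Afun at hA
          have hee : e (j+1+t-1) ≤ e (j+1+t) := he (j+1+t-1) (j+1+t)
            (by omega) (by omega) (by omega)
          linarith
      have hceq2 : (ν+1) + (hfun b e a m n j - (ν+1)) = hfun b e a m n j := by omega
      rw [hceq2] at htel
      have hSν1 : 0 ≤ Sfun b e a m n (j+1) (ν+1) := le_trans hSj1c htel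
      have := (hfun_mem b e a m n (j+1)).2.2 (ν+1) (by omega) (by omega)
      linarith
    have hBpart : ∀ k ν, 1 ≤ ν → ν ≤ n → n - ν ≤ k → ∀ μ, 1 ≤ μ → μ ≤ m →
        hfun b e a m n μ ≤ ν → 0 ≤ Bfun b e μ ν := by
      intro k
      induction k with
      | zero =>
        intro ν h1 h2 hk
        exact hBstep ν h1 h2 (fun ν2 hν2 hν2n _ _ _ _ => absurd hν2n (by omega))
      | succ k IHk =>
        intro ν h1 h2 hk
        exact hBstep ν h1 h2
          (fun ν2 hν2 hν2n μ2 hμ21 hμ2m hh => IHk ν2 (by omega) hν2n (by omega) μ2 hμ21 hμ2m hh)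
    intro μ ν h1 h2 h3 h4 h5
    exact ⟨hApart μ ν h1 h2 h3 h4 h5, hBpart (n - ν) ν h3 h4 le_rfl μ h1 h2 h5⟩
  · intro hcii
    constructor
    · intro μ ν h1 h2 h3 h4 hA hAmax
      have hν : ν < hfun b e a m n μ := by
        by_contra h
        push_neg at h
        have := (hcii μ ν h1 h2 h3 h4 h).1
        linarith
      have hc2 : hfun b e a m n μ ≤ n + 1 := (hfun_mem b e a m n μ).2.1
      have hSc : 0 ≤ Sfun b e a m n μ (hfun b e a m n μ) :=
        hfun_S_nonneg b e a m n μ (by omega)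
      have htel : Sfun b e a m n μ ((ν+1) + (hfun b e a m n μ - (ν+1))) ≤
          Sfun b e a m n μ (ν+1) := by
        apply myTdn b e a m n μ h1 (by omega)
        · omega
        · omega
        · intro t ht1 ht2
          have hAt := hAmax t (by omega) (by omega)
          unfold Afun at hAt
          have hee : e (μ+t-1) ≤ e (μ+t) := he (μ+t-1) (μ+t)
            (by omega) (by omega) (by omega)
          linarith
      have hceq2 : (ν+1) + (hfun b e a m n μ - (ν+1)) = hfun b e a m n μ := by omega
      rw [hceq2] at htel
      linarith
    · intro μ ν h1 h2 h3 h4 hB hBmin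
      have hν : ν < hfun b e a m n μ := by
        by_contra h
        push_neg at h
        have := (hcii μ ν h1 h2 h3 h4 h).2
        linarith
      apply lemE m n hm hn b e a hb he ha hwe hcii μ h1 h2 (ν+1) (by omega) (by omega)
      intro i hi1 hi2
      have h0 := hBmin i hi1 hi2
      unfold Bfun at h0 ⊢
      have hee : e (i+ν-1) ≤ e (i+(ν+1)-1) := he (i+ν-1) (i+(ν+1)-1)
        (by omega) (by omega) (by omega)
      linarith
end

section
/- Let (b,e,a) be any triple of splitting types of ranks m, m+n, n, and let 1 ≤ μ ≤ m−1. If B(μ,h_μ) ≥ 0, then h_{μ+1} ≥ h_μ. -/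
open Finset

lemma sum_Icc_split (f : ℕ → ℤ) (p q : ℕ) (h : p ≤ q) :
    ∑ i ∈ Icc p q, f i = f p + ∑ i ∈ Icc (p + 1) q, f i := by
  rw [← Finset.Ioc_insert_left h, Finset.sum_insert (by simp), ← Finset.Icc_add_one_left_eq_Ioc]

lemma Skey (b e a : ℕ → ℤ) (m n μ ν : ℕ) (hμ1 : 1 ≤ μ) (hμm : μ + 1 ≤ m)
    (hν1 : 1 ≤ ν) (hνn : ν ≤ n + 1) :
    Sfun b e a m n (μ + 1) ν = Sfun b e a m n μ ν + Bfun b e μ ν := by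
  unfold Sfun Bfun
  have h1 : ∑ i ∈ Icc μ m, b i = b μ + ∑ i ∈ Icc (μ + 1) m, b i :=
    sum_Icc_split b μ m (by omega)
  have h2 : ∑ i ∈ Icc (μ + ν - 1) (m + n), e i
      = e (μ + ν - 1) + ∑ i ∈ Icc (μ + ν) (m + n), e i := by
    have := sum_Icc_split e (μ + ν - 1) (m + n) (by omega)
    rwa [show μ + ν - 1 + 1 = μ + ν by omega] at this
  rw [show μ + 1 + ν - 1 = μ + ν by omega, h1, h2]
  ring

/-- Lemma: if `B(μ, h_μ) ≥ 0` then `h_{μ+1} ≥ h_μ`. -/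
theorem stmt1 (m n : ℕ) (hm : 1 ≤ m) (hn : 1 ≤ n)
    (b e a : ℕ → ℤ) (hb : Incr b m) (he : Incr e (m + n)) (ha : Incr a n)
    (μ : ℕ) (hμ1 : 1 ≤ μ) (hμm : μ + 1 ≤ m)
    (hB : 0 ≤ Bfun b e μ (hfun b e a m n μ)) :
    hfun b e a m n μ ≤ hfun b e a m n (μ + 1) := by
  have htop : ∀ κ, (n + 1) ∈ {ν : ℕ | 1 ≤ ν ∧ ν ≤ n + 1 ∧
      ∀ ν', ν < ν' → ν' ≤ n + 1 → Sfun b e a m n κ ν' < 0} :=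
    fun κ => ⟨by omega, le_refl _, fun ν' h1 h2 => absurd h1 (by omega)⟩
  have hmem : hfun b e a m n μ ∈ {ν : ℕ | 1 ≤ ν ∧ ν ≤ n + 1 ∧
      ∀ ν', ν < ν' → ν' ≤ n + 1 → Sfun b e a m n μ ν' < 0} :=
    Nat.sInf_mem ⟨n + 1, htop μ⟩
  obtain ⟨h1, h2, h3⟩ := hmem
  set h := hfun b e a m n μ with hh
  have hmem2 : hfun b e a m n (μ + 1) ∈ {ν : ℕ | 1 ≤ ν ∧ ν ≤ n + 1 ∧
      ∀ ν', ν < ν' → ν' ≤ n + 1 → Sfun b e a m n (μ + 1) ν' < 0} :=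
    Nat.sInf_mem ⟨n + 1, htop (μ + 1)⟩
  by_cases hc : h ≤ 1
  · have := hmem2.1
    omega
  · have hS : 0 ≤ Sfun b e a m n μ h := by
      have hnot : h - 1 ∉ {ν : ℕ | 1 ≤ ν ∧ ν ≤ n + 1 ∧
          ∀ ν', ν < ν' → ν' ≤ n + 1 → Sfun b e a m n μ ν' < 0} := by
        have hd : hfun b e a m n μ = sInf {ν : ℕ | 1 ≤ ν ∧ ν ≤ n + 1 ∧
            ∀ ν', ν < ν' → ν' ≤ n + 1 → Sfun b e a m n μ ν' < 0} := rfl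
        exact Nat.notMem_of_lt_sInf (by omega)
      simp only [Set.mem_setOf_eq, not_and, not_forall, not_lt] at hnot
      obtain ⟨ν', hν'1, hν'2, hν'3⟩ := hnot (by omega) (by omega)
      rcases eq_or_lt_of_le (show h ≤ ν' by omega) with heq | hlt
      · rwa [← heq] at hν'3
      · exact absurd (h3 ν' hlt hν'2) (not_lt.mpr hν'3)
    have hS2 : 0 ≤ Sfun b e a m n (μ + 1) h := by
      rw [Skey b e a m n μ h hμ1 hμm (by omega) h2]
      exact add_nonneg hS hB
    obtain ⟨g1, g2, g3⟩ := hmem2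
    by_contra hcon
    push_neg at hcon
    exact absurd (g3 h hcon h2) (not_lt.mpr hS2)
end

section
/- Suppose the triples (b,e,a) and (b',e,a') both satisfy the realizability criterion, where a and a' are splitting types of rank n and equal degree, b and b' are splitting types of rank m and equal degree, a' ≤ a, and b ≤ b' (in the balancedness partial order). Then the triple (b,e,a') satisfies the realizability criterion. -/
open Finset

lemma split_sum (f : ℕ → ℤ) {μ n : ℕ} (h1 : 1 ≤ μ) (h2 : μ ≤ n + 1) :
    ∑ i ∈ Icc 1 n, f i = (∑ i ∈ Icc 1 (μ - 1), f i) + ∑ i ∈ Icc μ n, f i := by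
  have hμ : μ - 1 + 1 = μ := Nat.succ_pred_eq_of_pos h1
  rw [← Finset.Ico_add_one_right_eq_Icc 1 n, ← Finset.Ico_add_one_right_eq_Icc 1 (μ - 1),
    ← Finset.Ico_add_one_right_eq_Icc μ n]
  simp only [Nat.succ_eq_add_one, hμ]
  exact (Finset.sum_Ico_consecutive f h1 h2).symm

/-- Suffix sums: if `g` has the same total sum as `f` and `f` dominates `g`
in prefix sums, then suffix sums of `f` are at most those of `g`. -/
lemma suffix_mono (f g : ℕ → ℤ) {n μ : ℕ} (h1 : 1 ≤ μ) (h2 : μ ≤ n + 1)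
    (hdeg : degT f n = degT g n) (hbal : MoreBal f g n) :
    ∑ i ∈ Icc μ n, f i ≤ ∑ i ∈ Icc μ n, g i := by
  have hs1 := split_sum f h1 h2
  have hs2 := split_sum g h1 h2
  have hp := hbal (μ - 1) (by omega)
  unfold degT at hdeg
  omega

lemma hfun_mono (b1 b2 e a1 a2 : ℕ → ℤ) (m n μ : ℕ)
    (hS : ∀ ν', 1 ≤ ν' → ν' ≤ n + 1 →
      Sfun b1 e a1 m n μ ν' ≤ Sfun b2 e a2 m n μ ν') :
    hfun b1 e a1 m n μ ≤ hfun b2 e a2 m n μ := by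
  set s1 := {ν : ℕ | 1 ≤ ν ∧ ν ≤ n + 1 ∧ ∀ ν', ν < ν' → ν' ≤ n + 1 → Sfun b1 e a1 m n μ ν' < 0}
  set s2 := {ν : ℕ | 1 ≤ ν ∧ ν ≤ n + 1 ∧ ∀ ν', ν < ν' → ν' ≤ n + 1 → Sfun b2 e a2 m n μ ν' < 0}
  have hsub : s2 ⊆ s1 := by
    rintro ν ⟨hν1, hν2, hν3⟩
    exact ⟨hν1, hν2, fun ν' h1' h2' =>
      lt_of_le_of_lt (hS ν' (by omega) h2') (hν3 ν' h1' h2')⟩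
  have hne : s2.Nonempty :=
    ⟨n + 1, ⟨by omega, le_rfl, fun ν' h1' h2' => absurd h2' (not_le.mpr h1')⟩⟩
  exact Nat.sInf_le (hsub (Nat.sInf_mem hne))

/-- If `(b,e,a)` and `(b',e,a')` satisfy the realizability criterion, with
`a' ≤ a` and `b ≤ b'` in the balancedness order, then so does `(b,e,a')`. -/
theorem stmt5 (m n : ℕ) (hm : 1 ≤ m) (hn : 1 ≤ n)
    (e b b' a a' : ℕ → ℤ)
    (he : Incr e (m + n)) (hb : Incr b m) (hb' : Incr b' m)
    (ha : Incr a n) (ha' : Incr a' n)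
    (hdega : degT a n = degT a' n) (hdegb : degT b m = degT b' m)
    (h1 : RealizCrit b e a m n) (h2 : RealizCrit b' e a' m n)
    (haa : MoreBal a a' n) (hbb : MoreBal b' b m) :
    RealizCrit b e a' m n := by
  obtain ⟨⟨hdeg1, hea1, hbe1⟩, hAB1⟩ := h1
  obtain ⟨⟨hdeg2, hea2, hbe2⟩, hAB2⟩ := h2
  -- suffix-sum comparisons
  have hsa : ∀ ν, 1 ≤ ν → ν ≤ n + 1 →
      ∑ i ∈ Icc ν n, a i ≤ ∑ i ∈ Icc ν n, a' i := fun ν hν1 hν2 =>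
    suffix_mono a a' hν1 hν2 hdega haa
  have hsb : ∀ μ, 1 ≤ μ → μ ≤ m + 1 →
      ∑ i ∈ Icc μ m, b' i ≤ ∑ i ∈ Icc μ m, b i := fun μ hμ1 hμ2 =>
    suffix_mono b' b hμ1 hμ2 hdegb.symm hbb
  refine ⟨⟨by rw [← hdega]; exact hdeg1, hea2, hbe1⟩, ?_⟩
  intro μ ν hμ1 hμm hν1 hνn hh
  have hS1 : ∀ ν', 1 ≤ ν' → ν' ≤ n + 1 →
      Sfun b e a m n μ ν' ≤ Sfun b e a' m n μ ν' := by
    intro ν' h1' h2'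
    unfold Sfun
    have := hsa ν' h1' h2'
    omega
  have hS2 : ∀ ν', 1 ≤ ν' → ν' ≤ n + 1 →
      Sfun b' e a' m n μ ν' ≤ Sfun b e a' m n μ ν' := by
    intro ν' h1' h2'
    unfold Sfun
    have := hsb μ hμ1 (by omega)
    omega
  have hm1 := hfun_mono b b e a a' m n μ hS1
  have hm2 := hfun_mono b' b e a' a' m n μ hS2
  exact ⟨(hAB2 μ ν hμ1 hμm hν1 hνn (hm2.trans hh)).1,
    (hAB1 μ ν hμ1 hμm hν1 hνn (hm1.trans hh)).2⟩
end

section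
/- Let a be any integer tuple, and let a', a'' be splitting types of the same rank and the same degree with a' ≥ a'' in the balancedness partial order. Then hom(a,a') ≤ hom(a,a'') and hom(a',a) ≤ hom(a'',a). -/
open Finset

/-! For a fixed threshold `t`, the terms `a'_j - t` of an increasing `a'` are positive exactly
on a suffix of indices, so `Σ max 0 (a'_j - t)` is a suffix sum of `a' - t`. Equal degree turns
the prefix-sum inequalities of `a' ≥ a''` into suffix-sum inequalities, which bound it by the
same suffix sum of `a'' - t`, and hence by `Σ max 0 (a''_j - t)`. Dually, `t - a'_j` is positive
on a prefix. Summing over the entries of `u` (with `t = u_i - 1`, resp. `t = u_i + 1`) gives the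
two inequalities. -/

lemma sum_max_zero_le_of_sum_filter_pos_le {ι α : Type*} [AddCommGroup α] [LinearOrder α]
    [IsOrderedAddMonoid α] (s : Finset ι) (x y : ι → α)
    (h : ∑ i ∈ s with 0 < x i, x i ≤ ∑ i ∈ s with 0 < x i, y i) :
    ∑ i ∈ s, max 0 (x i) ≤ ∑ i ∈ s, max 0 (y i) :=
  calc ∑ i ∈ s, max 0 (x i) = ∑ i ∈ s with 0 < x i, x i := by
        rw [sum_filter]
        refine sum_congr rfl fun i _ => ?_
        split_ifs with hi
        · exact max_eq_right hi.le
        · exact max_eq_left (not_lt.1 hi)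
    _ ≤ ∑ i ∈ s with 0 < x i, y i := h
    _ ≤ ∑ i ∈ s with 0 < x i, max 0 (y i) := sum_le_sum fun _ _ => le_max_right _ _
    _ ≤ ∑ i ∈ s, max 0 (y i) :=
        sum_le_sum_of_subset_of_nonneg (filter_subset _ _) fun _ _ _ => le_max_left _ _

section IntervalFilter

variable {P : ℕ → Prop} [DecidablePred P] {n : ℕ}

lemma exists_filter_Icc_eq_Icc_of_upward (hP : ∀ i j, 1 ≤ i → i ≤ j → j ≤ n → P i → P j) :
    ∃ k ≤ n, {j ∈ Icc 1 n | P j} = Icc (k + 1) n := by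
  set k := Nat.findGreatest (¬P ·) n with hk
  refine ⟨k, Nat.findGreatest_le n, ?_⟩
  ext j
  simp only [mem_filter, mem_Icc]
  constructor
  · rintro ⟨⟨hj1, hjn⟩, hPj⟩
    refine ⟨Nat.lt_of_not_le fun hjk => ?_, hjn⟩
    exact Nat.findGreatest_of_ne_zero hk.symm (by omega)
      (hP j k hj1 hjk (Nat.findGreatest_le n) hPj)
  · rintro ⟨hkj, hjn⟩
    refine ⟨⟨by omega, hjn⟩, by_contra fun hPj => ?_⟩
    have : j ≤ k := Nat.le_findGreatest (P := (¬P ·)) hjn hPj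
    omega

lemma exists_filter_Icc_eq_Icc_of_downward (hP : ∀ i j, 1 ≤ i → i ≤ j → j ≤ n → P j → P i) :
    ∃ k ≤ n, {j ∈ Icc 1 n | P j} = Icc 1 k := by
  set k := Nat.findGreatest P n with hk
  refine ⟨k, Nat.findGreatest_le n, ?_⟩
  ext j
  simp only [mem_filter, mem_Icc]
  constructor
  · rintro ⟨⟨hj1, hjn⟩, hPj⟩
    exact ⟨hj1, Nat.le_findGreatest hjn hPj⟩
  · rintro ⟨hj1, hjk⟩
    have hkn : k ≤ n := Nat.findGreatest_le n
    exact ⟨⟨hj1, by omega⟩, hP j k hj1 hjk hkn (Nat.findGreatest_of_ne_zero hk.symm (by omega))⟩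

end IntervalFilter

namespace MoreBal

variable {a' a'' : ℕ → ℤ} {n : ℕ}

lemma sum_Icc_add_one_le (hbal : MoreBal a' a'' n) (hdeg : degT a' n = degT a'' n)
    {k : ℕ} (hk : k ≤ n) :
    ∑ j ∈ Icc (k + 1) n, a' j ≤ ∑ j ∈ Icc (k + 1) n, a'' j := by
  have split (b : ℕ → ℤ) : ∑ j ∈ Icc 1 k, b j + ∑ j ∈ Icc (k + 1) n, b j = degT b n := by
    rw [degT, Icc_add_one_left_eq_Ioc, ← zero_add 1, Icc_add_one_left_eq_Ioc,
      Icc_add_one_left_eq_Ioc]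
    exact sum_Ioc_consecutive b k.zero_le hk
  linarith [split a', split a'', hbal k hk]

lemma sum_max_zero_sub_const_le (hbal : MoreBal a' a'' n) (hdeg : degT a' n = degT a'' n)
    (hincr : Incr a' n) (t : ℤ) :
    ∑ j ∈ Icc 1 n, max 0 (a' j - t) ≤ ∑ j ∈ Icc 1 n, max 0 (a'' j - t) := by
  apply sum_max_zero_le_of_sum_filter_pos_le
  obtain ⟨k, hk, hfilter⟩ := exists_filter_Icc_eq_Icc_of_upward (P := fun j => 0 < a' j - t)
    fun i j hi hij hj hPi => by linarith [hincr i j hi hij hj]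
  rw [hfilter, sum_sub_distrib, sum_sub_distrib]
  exact sub_le_sub_right (hbal.sum_Icc_add_one_le hdeg hk) _

lemma sum_max_zero_const_sub_le (hbal : MoreBal a' a'' n) (hincr : Incr a' n) (t : ℤ) :
    ∑ j ∈ Icc 1 n, max 0 (t - a' j) ≤ ∑ j ∈ Icc 1 n, max 0 (t - a'' j) := by
  apply sum_max_zero_le_of_sum_filter_pos_le
  obtain ⟨k, hk, hfilter⟩ := exists_filter_Icc_eq_Icc_of_downward (P := fun j => 0 < t - a' j)
    fun i j hi hij hj hPj => by linarith [hincr i j hi hij hj]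
  rw [hfilter, sum_sub_distrib, sum_sub_distrib]
  exact sub_le_sub_left (hbal k hk) _

end MoreBal

theorem stmt6_general (p n : ℕ) (u a' a'' : ℕ → ℤ)
    (h1 : Incr a' n)
    (hdeg : degT a' n = degT a'' n) (hbal : MoreBal a' a'' n) :
    homT u p a' n ≤ homT u p a'' n ∧ homT a' n u p ≤ homT a'' n u p := by
  constructor
  · simp only [homT, sub_add]
    exact sum_le_sum fun i _ => hbal.sum_max_zero_sub_const_le hdeg h1 (u i - 1)
  · simp only [homT, sub_add_eq_add_sub]
    rw [sum_comm, sum_comm (s := Icc 1 n)]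
    exact sum_le_sum fun j _ => hbal.sum_max_zero_const_sub_le h1 (u j + 1)

/-- If `a' ≥ a''` in the balancedness partial order (same rank and degree),
then `hom(a,a') ≤ hom(a,a'')` and `hom(a',a) ≤ hom(a'',a)` for any tuple `a`. -/
theorem stmt6 (p n : ℕ) (u a' a'' : ℕ → ℤ)
    (h1 : Incr a' n) (h2 : Incr a'' n)
    (hdeg : degT a' n = degT a'' n) (hbal : MoreBal a' a'' n) :
    homT u p a' n ≤ homT u p a'' n ∧ homT a' n u p ≤ homT a'' n u p :=
  stmt6_general p n u a' a'' h1 hdeg hbal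
end

section
/- Let a and a' be splitting types of the same rank and the same degree with a > a' (i.e., a ≥ a' in the balancedness partial order and a ≠ a'). Then hom(a,a') − end(a') < 0. -/
open Finset

/-!
Swapping the order of summation, `hom(u, a') = Σ_j φ_u(a'_j + 1)` with
`φ_u(x) = Σ_i max(0, x − u_i)`, so it suffices to compare `φ_a` and `φ_{a'}` pointwise.
For increasing `a`, `φ_a(x)` is the prefix sum `Σ_{i ≤ k} (x − a_i)` over the indices with
`a_i < x`; balancedness bounds it by `Σ_{i ≤ k} (x − a'_i) ≤ φ_{a'}(x)`. At the first index
`k` where the tuples differ we have `a'_k < a_k`, and at `x = a'_k + 1` the indices from the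
split point of `a` up to `k` add a positive amount to `φ_{a'}(x)`, since `a'` is increasing.
-/

def excess (u : ℕ → ℤ) (n : ℕ) (x : ℤ) : ℤ := ∑ i ∈ Icc 1 n, max 0 (x - u i)

lemma homT_eq_sum_excess (u : ℕ → ℤ) (p : ℕ) (v : ℕ → ℤ) (q : ℕ) :
    homT u p v q = ∑ j ∈ Icc 1 q, excess u p (v j + 1) := by
  rw [homT, sum_comm]
  simp only [excess, sub_add_eq_add_sub]

lemma sum_Icc_one_add_sum_Ioc {M : Type*} [AddCommMonoid M] (f : ℕ → M) {k n : ℕ} (hkn : k ≤ n) :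
    ∑ i ∈ Icc 1 k, f i + ∑ i ∈ Ioc k n, f i = ∑ i ∈ Icc 1 n, f i := by
  have hIcc : ∀ m : ℕ, Icc 1 m = Ioc 0 m := fun m => Icc_add_one_left_eq_Ioc 0 m
  rw [hIcc, hIcc]
  exact sum_Ioc_consecutive f (Nat.zero_le k) hkn

lemma Incr.exists_split {a : ℕ → ℤ} {n : ℕ} (ha : Incr a n) (x : ℤ) :
    ∃ k ≤ n, (∀ i, 1 ≤ i → i ≤ k → a i < x) ∧ ∀ i, k < i → i ≤ n → x ≤ a i := by
  induction n with
  | zero => exact ⟨0, le_rfl, by omega, by omega⟩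
  | succ n ih =>
    by_cases hx : a (n + 1) < x
    · exact ⟨n + 1, le_rfl, fun i hi hin => (ha i (n + 1) hi hin le_rfl).trans_lt hx, by omega⟩
    · obtain ⟨k, hkn, hlt, hge⟩ := ih fun i j hi hij hjn => ha i j hi hij (by omega)
      refine ⟨k, by omega, hlt, fun i hki hin => ?_⟩
      rcases hin.lt_or_eq with hin | rfl
      · exact hge i hki (by omega)
      · exact not_lt.mp hx

lemma sum_sub_le_excess (u : ℕ → ℤ) {k n : ℕ} (hkn : k ≤ n) (x : ℤ) :
    ∑ i ∈ Icc 1 k, (x - u i) ≤ excess u n x :=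
  (sum_le_sum fun _ _ => le_max_right 0 _).trans
    (sum_le_sum_of_subset_of_nonneg (Icc_subset_Icc_right hkn) fun _ _ _ => le_max_left 0 _)

lemma Incr.exists_excess_eq_sum {a : ℕ → ℤ} {n : ℕ} (ha : Incr a n) (x : ℤ) :
    ∃ k ≤ n, (∀ i, 1 ≤ i → i ≤ k → a i < x) ∧ excess a n x = ∑ i ∈ Icc 1 k, (x - a i) := by
  obtain ⟨k, hkn, hlt, hge⟩ := ha.exists_split x
  refine ⟨k, hkn, hlt, ?_⟩
  have hhead : ∑ i ∈ Icc 1 k, max 0 (x - a i) = ∑ i ∈ Icc 1 k, (x - a i) :=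
    sum_congr rfl fun i hi => by
      have := hlt i (mem_Icc.mp hi).1 (mem_Icc.mp hi).2
      exact max_eq_right (by omega)
  have htail : ∑ i ∈ Ioc k n, max 0 (x - a i) = 0 :=
    sum_eq_zero fun i hi => by
      have := hge i (mem_Ioc.mp hi).1 (mem_Ioc.mp hi).2
      exact max_eq_left (by omega)
  rw [excess, ← sum_Icc_one_add_sum_Ioc _ hkn, hhead, htail, add_zero]

lemma excess_le_of_moreBal {a a' : ℕ → ℤ} {n : ℕ} (ha : Incr a n) (hbal : MoreBal a a' n)
    (x : ℤ) : excess a n x ≤ excess a' n x := by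
  obtain ⟨k, hkn, -, hexcess⟩ := ha.exists_excess_eq_sum x
  calc excess a n x = ∑ i ∈ Icc 1 k, (x - a i) := hexcess
    _ ≤ ∑ i ∈ Icc 1 k, (x - a' i) := by
      simp only [sum_sub_distrib]
      exact sub_le_sub_left (hbal k hkn) _
    _ ≤ excess a' n x := sum_sub_le_excess a' hkn x

lemma excess_lt_of_first_lt {a a' : ℕ → ℤ} {n k : ℕ} (ha : Incr a n) (ha' : Incr a' n)
    (hk : 1 ≤ k) (hkn : k ≤ n) (hagree : ∀ i, 1 ≤ i → i < k → a i = a' i) (hlt : a' k < a k) :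
    excess a n (a' k + 1) < excess a' n (a' k + 1) := by
  set x := a' k + 1
  obtain ⟨k₀, -, hbelow, hexcess⟩ := ha.exists_excess_eq_sum x
  have hk₀ : k₀ < k := by
    by_contra! hle
    have := hbelow k hk hle
    omega
  have hprefix : ∑ i ∈ Icc 1 k₀, (x - a i) = ∑ i ∈ Icc 1 k₀, (x - a' i) :=
    sum_congr rfl fun i hi => by rw [hagree i (mem_Icc.mp hi).1 ((mem_Icc.mp hi).2.trans_lt hk₀)]
  have hgap : 0 < ∑ i ∈ Ioc k₀ k, (x - a' i) :=
    sum_pos (fun i hi => by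
        have := ha' i k (by have := (mem_Ioc.mp hi).1; omega) (mem_Ioc.mp hi).2 hkn
        omega)
      ⟨k, mem_Ioc.mpr ⟨hk₀, le_rfl⟩⟩
  calc excess a n x = ∑ i ∈ Icc 1 k₀, (x - a' i) := hexcess.trans hprefix
    _ < ∑ i ∈ Icc 1 k, (x - a' i) := by
      rw [← sum_Icc_one_add_sum_Ioc _ hk₀.le]
      exact lt_add_of_pos_right _ hgap
    _ ≤ excess a' n x := sum_sub_le_excess a' hkn x

lemma StrictMoreBal.exists_first_lt {a a' : ℕ → ℤ} {n : ℕ} (h : StrictMoreBal a a' n) :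
    ∃ k, 1 ≤ k ∧ k ≤ n ∧ (∀ i, 1 ≤ i → i < k → a i = a' i) ∧ a' k < a k := by
  classical
  obtain ⟨hbal, hne⟩ := h
  obtain ⟨hk, hkn, hdiff⟩ := Nat.find_spec hne
  set k := Nat.find hne
  have hagree : ∀ i, 1 ≤ i → i < k → a i = a' i := fun i hi hik => by
    by_contra hai
    exact Nat.find_min hne hik ⟨hi, by omega, hai⟩
  have hprefix : ∑ i ∈ Icc 1 (k - 1), a i = ∑ i ∈ Icc 1 (k - 1), a' i :=
    sum_congr rfl fun i hi => hagree i (mem_Icc.mp hi).1 (by have := (mem_Icc.mp hi).2; omega)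
  have hbal_k := hbal k hkn
  have hk_succ : k - 1 + 1 = k := Nat.sub_add_cancel hk
  rw [← hk_succ, sum_Icc_succ_top (by omega), sum_Icc_succ_top (by omega), hk_succ, hprefix]
    at hbal_k
  exact ⟨k, hk, hkn, hagree, lt_of_le_of_ne (by omega) (Ne.symm hdiff)⟩

theorem stmt7_general (n : ℕ) (a a' : ℕ → ℤ)
    (ha : Incr a n) (ha' : Incr a' n)
    (h : StrictMoreBal a a' n) :
    homT a n a' n - homT a' n a' n < 0 := by
  obtain ⟨k, hk, hkn, hagree, hlt⟩ := h.exists_first_lt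
  rw [homT_eq_sum_excess, homT_eq_sum_excess, sub_neg]
  exact sum_lt_sum (fun j _ => excess_le_of_moreBal ha h.1 _)
    ⟨k, mem_Icc.mpr ⟨hk, hkn⟩, excess_lt_of_first_lt ha ha' hk hkn hagree hlt⟩

/-- If `a > a'` in the balancedness partial order (same rank and degree),
then `hom(a,a') − end(a') < 0`. -/
theorem stmt7 (n : ℕ) (a a' : ℕ → ℤ)
    (ha : Incr a n) (ha' : Incr a' n)
    (hdeg : degT a n = degT a' n) (h : StrictMoreBal a a' n) :
    homT a n a' n - homT a' n a' n < 0 :=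
  stmt7_general n a a' ha ha' h
end

section
/- Let e be a splitting type of rank m+n, let a, a' be splitting types of rank n and equal degree, and b, b' splitting types of rank m and equal degree, with deg a + deg b = deg e. Suppose sort(b,a) ≤ e in the balancedness partial order, a > a', and b ≥ b'. Then hom(e,a') − end(a') − hom(b',a') < 0. -/
/-!
Write `hom(c, t) = Σ_i max(0, t - c_i + 1)` for the dimension of `Hom(O(c), O(t))`. For weakly
increasing `c` the positive terms form an initial segment `i ≤ r`, so `hom(c, t) = r(t+1) - Σ_{i≤r} c_i`,
while for any `c'` the same expression is a lower bound of `hom(c', t)`. Hence `hom(-, t)` can only grow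
when passing to a less balanced tuple, and it grows strictly at `t = a'_p`, `p` the first index where the
prefix sums of `a` and `a'` differ. Summing over the entries of `a'`, and using
`hom(e, -) ≤ hom(sort(b,a), -) = hom(b, -) + hom(a, -)`, gives
`hom(e, a') ≤ hom(b', a') + hom(a, a') < hom(b', a') + hom(a', a')`.
-/

open Finset

def homTo (c : ℕ → ℤ) (n : ℕ) (t : ℤ) : ℤ := ∑ i ∈ Icc 1 n, max 0 (t - c i + 1)

lemma homT_eq_sum_homTo (u : ℕ → ℤ) (p : ℕ) (v : ℕ → ℤ) (q : ℕ) :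
    homT u p v q = ∑ j ∈ Icc 1 q, homTo u p (v j) := by
  rw [homT, sum_comm]
  rfl

lemma sum_Icc_sub_add_one (c : ℕ → ℤ) (r : ℕ) (t : ℤ) :
    ∑ i ∈ Icc 1 r, (t - c i + 1) = r * (t + 1) - ∑ i ∈ Icc 1 r, c i := by
  simp only [sum_add_distrib, sum_sub_distrib, sum_const, Nat.card_Icc, add_tsub_cancel_right,
    Int.nsmul_eq_mul, mul_one]
  ring

lemma sum_le_homTo (c : ℕ → ℤ) {n r : ℕ} (hr : r ≤ n) (t : ℤ) :
    ∑ i ∈ Icc 1 r, (t - c i + 1) ≤ homTo c n t :=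
  calc ∑ i ∈ Icc 1 r, (t - c i + 1) ≤ ∑ i ∈ Icc 1 r, max 0 (t - c i + 1) :=
        sum_le_sum fun _ _ => le_max_right _ _
    _ ≤ homTo c n t :=
        sum_le_sum_of_subset_of_nonneg (Icc_subset_Icc_right hr) fun _ _ _ => le_max_left _ _

lemma Incr.mono {c : ℕ → ℤ} {n k : ℕ} (hc : Incr c n) (hk : k ≤ n) : Incr c k :=
  fun i j hi hij hj => hc i j hi hij (hj.trans hk)

lemma exists_homTo_eq_sum {c : ℕ → ℤ} {n : ℕ} (hc : Incr c n) (t : ℤ) :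
    ∃ r ≤ n, (∀ i, 1 ≤ i → i ≤ r → c i ≤ t) ∧ homTo c n t = ∑ i ∈ Icc 1 r, (t - c i + 1) := by
  induction n with
  | zero => exact ⟨0, le_rfl, fun i hi hi0 => by omega, rfl⟩
  | succ n ih =>
    by_cases htop : c (n + 1) ≤ t
    · have hle : ∀ i, 1 ≤ i → i ≤ n + 1 → c i ≤ t :=
        fun i hi hin => (hc i (n + 1) hi hin le_rfl).trans htop
      refine ⟨n + 1, le_rfl, hle, sum_congr rfl fun i hi => ?_⟩
      obtain ⟨hi1, hin⟩ := mem_Icc.mp hi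
      exact max_eq_right (by linarith [hle i hi1 hin])
    · obtain ⟨r, hr, hle, heq⟩ := ih (hc.mono n.le_succ)
      refine ⟨r, hr.trans n.le_succ, hle, ?_⟩
      rw [homTo, sum_Icc_succ_top (by omega), ← homTo, heq, max_eq_left (by omega), add_zero]

lemma homTo_le_of_moreBal {c c' : ℕ → ℤ} {n : ℕ} (hc : Incr c n) (hbal : MoreBal c c' n)
    (t : ℤ) : homTo c n t ≤ homTo c' n t := by
  obtain ⟨r, hr, -, heq⟩ := exists_homTo_eq_sum hc t
  have hcc' : ∑ i ∈ Icc 1 r, (t - c i + 1) ≤ ∑ i ∈ Icc 1 r, (t - c' i + 1) := by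
    rw [sum_Icc_sub_add_one, sum_Icc_sub_add_one]
    linarith [hbal r hr]
  exact heq ▸ hcc'.trans (sum_le_homTo c' hr t)

lemma sum_Icc_eq_sum_Icc_sub_one_add (f : ℕ → ℤ) {p : ℕ} (hp : 1 ≤ p) :
    ∑ i ∈ Icc 1 p, f i = ∑ i ∈ Icc 1 (p - 1), f i + f p := by
  obtain ⟨q, rfl⟩ : ∃ q, p = q + 1 := ⟨p - 1, by omega⟩
  rw [sum_Icc_succ_top (by omega), Nat.add_sub_cancel]

lemma StrictMoreBal.exists_first_prefix_lt {f g : ℕ → ℤ} {n : ℕ} (h : StrictMoreBal f g n) :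
    ∃ p, 1 ≤ p ∧ p ≤ n ∧ ∑ i ∈ Icc 1 p, g i < ∑ i ∈ Icc 1 p, f i ∧
      ∀ k < p, ∑ i ∈ Icc 1 k, f i = ∑ i ∈ Icc 1 k, g i := by
  classical
  obtain ⟨hbal, i₀, hi₀, hi₀n, hne⟩ := h
  have hex : ∃ k, k ≤ n ∧ ∑ i ∈ Icc 1 k, g i < ∑ i ∈ Icc 1 k, f i := by
    by_contra! hall
    have heq : ∀ k ≤ n, ∑ i ∈ Icc 1 k, f i = ∑ i ∈ Icc 1 k, g i :=
      fun k hk => (hall k hk).antisymm (hbal k hk)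
    have h₁ := heq i₀ hi₀n
    rw [sum_Icc_eq_sum_Icc_sub_one_add f hi₀, sum_Icc_eq_sum_Icc_sub_one_add g hi₀,
      heq (i₀ - 1) (by omega)] at h₁
    exact hne (add_left_cancel h₁)
  obtain ⟨hpn, hlt⟩ := Nat.find_spec hex
  refine ⟨Nat.find hex, ?_, hpn, hlt, fun k hk => ?_⟩
  · by_contra! h0
    simp [Nat.lt_one_iff.mp h0] at hlt
  · have hkn : k ≤ n := by omega
    exact (not_lt.mp fun hk' => Nat.find_min hex hk ⟨hkn, hk'⟩).antisymm (hbal k hkn)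

/-- At the first index `p` where the prefix sums differ, `c_p > c'_p`, so all positive terms of
`hom(c, c'_p)` lie before `p`, where `c` and `c'` have the same prefix sums; the terms of
`hom(c', c'_p)` at the indices up to `p` not accounted for are `≥ 1`. -/
lemma homTo_lt_of_first_prefix_lt {c c' : ℕ → ℤ} {n p : ℕ} (hc : Incr c n) (hc' : Incr c' n)
    (hp : 1 ≤ p) (hpn : p ≤ n) (hlt : ∑ i ∈ Icc 1 p, c' i < ∑ i ∈ Icc 1 p, c i)
    (heq : ∀ k < p, ∑ i ∈ Icc 1 k, c i = ∑ i ∈ Icc 1 k, c' i) :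
    homTo c n (c' p) < homTo c' n (c' p) := by
  have hcp : c' p < c p := by
    rw [sum_Icc_eq_sum_Icc_sub_one_add c hp, sum_Icc_eq_sum_Icc_sub_one_add c' hp,
      heq (p - 1) (by omega)] at hlt
    linarith
  obtain ⟨r, -, hle, hsum⟩ := exists_homTo_eq_sum hc (c' p)
  have hrp : r < p := by
    by_contra! hpr
    linarith [hle p hp hpr]
  have hterm : ∀ i ∈ Ioc r p, (1 : ℤ) ≤ c' p - c' i + 1 := fun i hi => by
    obtain ⟨hri, hip⟩ := mem_Ioc.mp hi
    linarith [hc' i p (by omega) hip hpn]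
  have htail : (1 : ℤ) ≤ ∑ i ∈ Ioc r p, (c' p - c' i + 1) :=
    calc (1 : ℤ) ≤ (Ioc r p).card := by simp only [Nat.card_Ioc, Nat.one_le_cast]; omega
      _ = ∑ _ ∈ Ioc r p, (1 : ℤ) := by simp
      _ ≤ _ := sum_le_sum hterm
  have hsplit : ∑ i ∈ Icc 1 p, (c' p - c' i + 1) =
      ∑ i ∈ Icc 1 r, (c' p - c' i + 1) + ∑ i ∈ Ioc r p, (c' p - c' i + 1) := by
    have hIcc (x : ℕ) : Icc 1 x = Ioc 0 x := by ext; simp only [mem_Icc, mem_Ioc]; omega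
    rw [hIcc, hIcc, sum_Ioc_consecutive _ r.zero_le hrp.le]
  have hhead : ∑ i ∈ Icc 1 r, (c' p - c i + 1) = ∑ i ∈ Icc 1 r, (c' p - c' i + 1) := by
    rw [sum_Icc_sub_add_one, sum_Icc_sub_add_one, heq r hrp]
  linarith [sum_le_homTo c' hpn (c' p)]

lemma StrictMoreBal.exists_homTo_lt {c c' : ℕ → ℤ} {n : ℕ} (h : StrictMoreBal c c' n)
    (hc : Incr c n) (hc' : Incr c' n) :
    ∃ j ∈ Icc 1 n, homTo c n (c' j) < homTo c' n (c' j) := by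
  obtain ⟨p, hp, hpn, hlt, heq⟩ := h.exists_first_prefix_lt
  exact ⟨p, mem_Icc.mpr ⟨hp, hpn⟩, homTo_lt_of_first_prefix_lt hc hc' hp hpn hlt heq⟩

lemma homTo_of_map_eq_add {s b a : ℕ → ℤ} {m n : ℕ}
    (hs : Multiset.map s (Icc 1 (m + n)).val =
      Multiset.map b (Icc 1 m).val + Multiset.map a (Icc 1 n).val) (t : ℤ) :
    homTo s (m + n) t = homTo b m t + homTo a n t := by
  have := congrArg (fun M => (M.map fun x => max 0 (t - x + 1)).sum) hs
  simpa [homTo, Multiset.map_map, sum_map_val] using this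

theorem stmt8_general (m n : ℕ)
    (e b b' a a' : ℕ → ℤ)
    (he : Incr e (m + n)) (hb : Incr b m)
    (ha : Incr a n) (ha' : Incr a' n)
    (hsort : ∃ s : ℕ → ℤ, Incr s (m + n) ∧
      Multiset.map s (Icc 1 (m + n)).val =
        Multiset.map b (Icc 1 m).val + Multiset.map a (Icc 1 n).val ∧
      MoreBal e s (m + n))
    (haa : StrictMoreBal a a' n) (hbb : MoreBal b b' m) :
    homT e (m + n) a' n - homT a' n a' n - homT b' m a' n < 0 := by
  obtain ⟨s, -, hs, hes⟩ := hsort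
  have he_le (t : ℤ) : homTo e (m + n) t ≤ homTo b' m t + homTo a n t :=
    calc homTo e (m + n) t ≤ homTo s (m + n) t := homTo_le_of_moreBal he hes t
      _ = homTo b m t + homTo a n t := homTo_of_map_eq_add hs t
      _ ≤ homTo b' m t + homTo a n t := by gcongr; exact homTo_le_of_moreBal hb hbb t
  have ha_lt : ∑ j ∈ Icc 1 n, homTo a n (a' j) < ∑ j ∈ Icc 1 n, homTo a' n (a' j) :=
    sum_lt_sum (fun j _ => homTo_le_of_moreBal ha haa.1 (a' j)) (haa.exists_homTo_lt ha ha')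
  have he_sum := sum_le_sum fun j (_ : j ∈ Icc 1 n) => he_le (a' j)
  rw [sum_add_distrib] at he_sum
  simp only [homT_eq_sum_homTo]
  linarith

/-- If `sort(b,a) ≤ e`, `a > a'` and `b ≥ b'`, then
`hom(e,a') − end(a') − hom(b',a') < 0`. -/
theorem stmt8 (m n : ℕ) (hm : 1 ≤ m) (hn : 1 ≤ n)
    (e b b' a a' : ℕ → ℤ)
    (he : Incr e (m + n)) (hb : Incr b m) (hb' : Incr b' m)
    (ha : Incr a n) (ha' : Incr a' n)
    (hdega : degT a n = degT a' n) (hdegb : degT b m = degT b' m)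
    (hdeg : degT a n + degT b m = degT e (m + n))
    (hsort : ∃ s : ℕ → ℤ, Incr s (m + n) ∧
      Multiset.map s (Icc 1 (m + n)).val =
        Multiset.map b (Icc 1 m).val + Multiset.map a (Icc 1 n).val ∧
      MoreBal e s (m + n))
    (haa : StrictMoreBal a a' n) (hbb : MoreBal b b' m) :
    homT e (m + n) a' n - homT a' n a' n - homT b' m a' n < 0 :=
  stmt8_general m n e b b' a a' he hb ha ha' hsort haa hbb
end

section
/- Let (b,a) = Pair(m',n',Λ,δ) be a combinatorially stable pair with respect to e, and suppose δ_i > 0 for some i > 1. Let δ'' = (δ_1 + 1, δ_2, …, δ_{i−1}, δ_i − 1, δ_{i+1}, …, δ_r) and let (b'',a'') = Pair(m',n',Λ,δ''). Then the triple (b'',e,a'') satisfies the realizability criterion, and a'' > a in the balancedness partial order. -/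
open Finset

/-- `t` (indexed on `lo..hi`) is `α((lo,…,hi), δ)`: the most balanced weakly
increasing tuple that is entrywise `≥ e` on the block and whose sum exceeds that
of `e` on the block by `δ`. -/
def IsAlphaBlock (e : ℕ → ℤ) (lo hi : ℕ) (δ : ℤ) (t : ℕ → ℤ) : Prop :=
  (∀ j k, lo ≤ j → j ≤ k → k ≤ hi → t j ≤ t k) ∧
  (∀ j, lo ≤ j → j ≤ hi → e j ≤ t j) ∧
  ((∑ j ∈ Icc lo hi, t j) = (∑ j ∈ Icc lo hi, e j) + δ) ∧
  (∀ t' : ℕ → ℤ, (∀ j k, lo ≤ j → j ≤ k → k ≤ hi → t' j ≤ t' k) →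
    (∀ j, lo ≤ j → j ≤ hi → e j ≤ t' j) →
    ((∑ j ∈ Icc lo hi, t' j) = (∑ j ∈ Icc lo hi, e j) + δ) →
    ∀ k, lo ≤ k → k ≤ hi → (∑ j ∈ Icc lo k, t' j) ≤ ∑ j ∈ Icc lo k, t j)

/-- `t` (indexed on `lo..hi`) is `β((lo,…,hi), δ)`: the most balanced weakly
increasing tuple that is entrywise `≤ e` on the block and whose sum is `δ` less
than that of `e` on the block. -/
def IsBetaBlock (e : ℕ → ℤ) (lo hi : ℕ) (δ : ℤ) (t : ℕ → ℤ) : Prop :=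
  (∀ j k, lo ≤ j → j ≤ k → k ≤ hi → t j ≤ t k) ∧
  (∀ j, lo ≤ j → j ≤ hi → t j ≤ e j) ∧
  ((∑ j ∈ Icc lo hi, t j) = (∑ j ∈ Icc lo hi, e j) - δ) ∧
  (∀ t' : ℕ → ℤ, (∀ j k, lo ≤ j → j ≤ k → k ≤ hi → t' j ≤ t' k) →
    (∀ j, lo ≤ j → j ≤ hi → t' j ≤ e j) →
    ((∑ j ∈ Icc lo hi, t' j) = (∑ j ∈ Icc lo hi, e j) - δ) →
    ∀ k, lo ≤ k → k ≤ hi → (∑ j ∈ Icc lo k, t' j) ≤ ∑ j ∈ Icc lo k, t j)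

/-- `(b, a) = Pair(m', n', Λ, δ)`, where the partition
`Λ = (P_1, Q_1, …, P_r, Q_r)` of `(n'+1, …, m+n−m')` is encoded by its block
boundaries `c 0 = n' < c 1 < ⋯ < c (2r) = m+n−m'`, with
`P_i = (c(2i−2)+1, …, c(2i−1))` and `Q_i = (c(2i−1)+1, …, c(2i))`, and where
`αt i` and `βt i` are the tuples `α(Q_i, δ_i)` and `β(P_i, δ_i)` (indexed by the
block indices of `Q_i`, resp. `P_i`).  This records everything in the
definition of a combinatorially stable pair except the bounds on `δ`. -/
def PairData (e : ℕ → ℤ) (m n : ℕ) (b a : ℕ → ℤ)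
    (m' n' r : ℕ) (c : ℕ → ℕ) (δ : ℕ → ℕ) (αt βt : ℕ → ℕ → ℤ) : Prop :=
  m' ≤ m ∧ n' ≤ n ∧ 1 ≤ r ∧
  c 0 = n' ∧ c (2 * r) = m + n - m' ∧
  (∀ i, i < 2 * r → c i < c (i + 1)) ∧
  ((∑ i ∈ Icc 1 r, (c (2 * i - 1) - c (2 * i - 2))) = m - m') ∧
  (∀ i, 1 ≤ i → i ≤ r - 1 → e (c (2 * i - 1)) < e (c (2 * i + 1) + 1)) ∧
  (∀ i, 1 ≤ i → i ≤ r → IsAlphaBlock e (c (2 * i - 1) + 1) (c (2 * i)) (δ i) (αt i)) ∧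
  (∀ i, 1 ≤ i → i ≤ r → IsBetaBlock e (c (2 * i - 2) + 1) (c (2 * i - 1)) (δ i) (βt i)) ∧
  (∀ j, 1 ≤ j → j ≤ n' → a j = e j) ∧
  (∀ i, 1 ≤ i → i ≤ r → ∀ j, c (2 * i - 1) < j → j ≤ c (2 * i) →
    a (j - (∑ k ∈ Icc 1 i, (c (2 * k - 1) - c (2 * k - 2)))) = αt i j) ∧
  (∀ i, 1 ≤ i → i ≤ r → ∀ j, c (2 * i - 2) < j → j ≤ c (2 * i - 1) →
    b (j - n' - (∑ k ∈ Icc 1 (i - 1), (c (2 * k) - c (2 * k - 1)))) = βt i j) ∧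
  (∀ t, 1 ≤ t → t ≤ m' → b (m - m' + t) = e (m + n - m' + t))

/-- The bounds `0 ≤ δ_i ≤ min(ΔP_i, ΔQ_i)`, with the conventions
`ΔP_1 = +∞` when `P_{1,1} = 1` (i.e. `n' = 0`) and `ΔQ_r = +∞` when
`Q_{r,last} = m+n` (i.e. `m' = 0`). -/
def DeltaBounds (e : ℕ → ℤ) (m' n' r : ℕ) (c : ℕ → ℕ) (δ : ℕ → ℕ) : Prop :=
  ∀ i, 1 ≤ i → i ≤ r →
    ((i = 1 ∧ n' = 0) ∨
      (δ i : ℤ) ≤ ∑ j ∈ Icc (c (2 * i - 2) + 1) (c (2 * i - 1)), (e j - e (c (2 * i - 2)) - 1)) ∧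
    ((i = r ∧ m' = 0) ∨
      (δ i : ℤ) ≤ ∑ j ∈ Icc (c (2 * i - 1) + 1) (c (2 * i)), (e (c (2 * i) + 1) - e j - 1))

/-- `(b,a)` is a combinatorially stable pair with respect to `e`. -/
def CombStable (e : ℕ → ℤ) (m n : ℕ) (b a : ℕ → ℤ) : Prop :=
  ∃ (m' n' r : ℕ) (c : ℕ → ℕ) (δ : ℕ → ℕ) (αt βt : ℕ → ℕ → ℤ),
    PairData e m n b a m' n' r c δ αt βt ∧ DeltaBounds e m' n' r c δ

/-- `(b,a)` is a stable pair with respect to `e`: the triple `(b,e,a)` is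
realizable, and no generization in either the quotient or the kernel splitting
type is realizable. -/
def Stable (e b a : ℕ → ℤ) (m n : ℕ) : Prop :=
  RealizCrit b e a m n ∧
  (∀ a' : ℕ → ℤ, Incr a' n → degT a' n = degT a n → StrictMoreBal a' a n →
    ¬ RealizCrit b e a' m n) ∧
  (∀ b' : ℕ → ℤ, Incr b' m → degT b' m = degT b m → StrictMoreBal b' b m →
    ¬ RealizCrit b' e a m n)

/-
Every `Pair(m', n', Λ, δ)` is realizable, whatever `δ`.  On each block the entries of `a`
(resp. `b`) dominate (resp. are dominated by) the entries of `e` shifted by the lengths of the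
preceding blocks of the other kind, and at each block boundary the prefix sums of `a` and `b`
together add up to the corresponding prefix sum of `e`.  The latter gives `S(μ, ν) ≥ 0` for `ν`
the first index of the `Q`-block following the `P`-block of `μ`, so `h_μ` is at least that
index, and from there on the former gives `A, B ≥ 0`.

Passing one unit from `δ_i` to `δ_1` raises every prefix sum of `a''` by one on the blocks
`Q_2, …, Q_i`; this pays for the at most one unit that a prefix of `α(Q_i, ·)` loses when its
`δ` drops by one, while on `Q_1` the larger `δ_1` only helps.  The sum over `Q_1` changes by
one, so `a'' ≠ a`.
-/

-- `lenP c k = |P_1| + ⋯ + |P_k|` and `lenQ c k = |Q_1| + ⋯ + |Q_k|`.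
def lenP (c : ℕ → ℕ) (k : ℕ) : ℕ := ∑ l ∈ Icc 1 k, (c (2 * l - 1) - c (2 * l - 2))

def lenQ (c : ℕ → ℕ) (k : ℕ) : ℕ := ∑ l ∈ Icc 1 k, (c (2 * l) - c (2 * l - 1))

lemma Icc_one_eq_Ioc_zero (k : ℕ) : Icc 1 k = Ioc 0 k := Icc_add_one_left_eq_Ioc 0 k

lemma sum_Ioc_add_right (f : ℕ → ℤ) (a b d : ℕ) :
    ∑ i ∈ Ioc a b, f (i + d) = ∑ j ∈ Ioc (a + d) (b + d), f j := by
  rw [← map_add_right_Ioc, sum_map]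
  rfl

lemma exists_apply_sub_one_lt_le (g : ℕ → ℕ) {r μ : ℕ} (h0 : g 0 < μ) (hr : μ ≤ g r) :
    ∃ k, 1 ≤ k ∧ k ≤ r ∧ g (k - 1) < μ ∧ μ ≤ g k := by
  induction r with
  | zero => omega
  | succ r ih =>
    rcases le_or_gt μ (g r) with h | h
    · obtain ⟨k, hk1, hkr, hk⟩ := ih h
      exact ⟨k, hk1, by omega, hk⟩
    · exact ⟨r + 1, by omega, le_rfl, h, hr⟩

lemma lt_hfun_of_Sfun_nonneg {b e a : ℕ → ℤ} {m n μ ν ν' : ℕ} (hνν' : ν < ν') (hν' : ν' ≤ n + 1)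
    (hS : 0 ≤ Sfun b e a m n μ ν') : ν < hfun b e a m n μ := by
  by_contra! hle
  have hne : {x : ℕ | 1 ≤ x ∧ x ≤ n + 1 ∧
      ∀ y, x < y → y ≤ n + 1 → Sfun b e a m n μ y < 0}.Nonempty :=
    ⟨n + 1, by omega, le_rfl, fun y hy1 hy2 => by omega⟩
  have := (Nat.sInf_mem hne).2.2 ν' (by unfold hfun at hle; omega) hν'
  omega

lemma Sfun_eq_sub {b e a : ℕ → ℤ} {m n μ ν : ℕ}
    (hdeg : ∑ i ∈ Ioc 0 n, a i + ∑ i ∈ Ioc 0 m, b i = ∑ j ∈ Ioc 0 (m + n), e j)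
    (hμ1 : 1 ≤ μ) (hμ : μ ≤ m + 1) (hν1 : 1 ≤ ν) (hν : ν ≤ n + 1) :
    Sfun b e a m n μ ν = ∑ j ∈ Ioc 0 (μ - 1 + (ν - 1)), e j - ∑ i ∈ Ioc 0 (ν - 1), a i
      - ∑ i ∈ Ioc 0 (μ - 1), b i := by
  obtain ⟨p, rfl⟩ : ∃ p, μ = p + 1 := ⟨μ - 1, by omega⟩
  obtain ⟨q, rfl⟩ : ∃ q, ν = q + 1 := ⟨ν - 1, by omega⟩
  have hsplit (f : ℕ → ℤ) {s t : ℕ} (hst : s ≤ t) :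
      ∑ i ∈ Icc (s + 1) t, f i = ∑ i ∈ Ioc 0 t, f i - ∑ i ∈ Ioc 0 s, f i := by
    rw [Icc_add_one_left_eq_Ioc, ← sum_Ioc_consecutive f (Nat.zero_le s) hst]
    ring
  rw [Sfun, hsplit a (by omega), hsplit b (by omega),
    show p + 1 + (q + 1) - 1 = p + q + 1 by omega, hsplit e (by omega)]
  simp only [Nat.add_sub_cancel]
  linarith

namespace IsAlphaBlock

variable {e t t'' : ℕ → ℤ} {lo hi k : ℕ} {d : ℤ}

lemma sum_Icc_le_of_succ (ht : IsAlphaBlock e lo hi d t) (ht'' : IsAlphaBlock e lo hi (d + 1) t'')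
    (hk1 : lo ≤ k) (hk2 : k ≤ hi) : ∑ j ∈ Icc lo k, t j ≤ ∑ j ∈ Icc lo k, t'' j := by
  classical
  obtain ⟨hmono, hge, hsum, -⟩ := ht
  -- raising the last entry by one keeps `t` admissible for `d + 1`
  set u := t + Pi.single hi 1
  have hu (j : ℕ) : u j = t j + if j = hi then 1 else 0 := by simp [u, Pi.single_apply]
  have hu_sum (k : ℕ) :
      ∑ j ∈ Icc lo k, u j = ∑ j ∈ Icc lo k, t j + if hi ∈ Icc lo k then 1 else 0 := by
    simp only [u, Pi.add_apply, sum_add_distrib, sum_pi_single']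
  refine le_trans ?_ (ht''.2.2.2 u (fun j k h1 h2 h3 => ?_) (fun j h1 h2 => ?_) ?_ k hk1 hk2)
  · rw [hu_sum]
    split_ifs <;> omega
  · have := hmono j k h1 h2 h3
    rw [hu, hu]
    split_ifs <;> omega
  · have := hge j h1 h2
    rw [hu]
    split_ifs <;> omega
  · rw [hu_sum, if_pos (by simp only [mem_Icc]; omega), hsum]
    ring

lemma sum_Icc_le_add_one_of_pred (he : ∀ j k, lo ≤ j → j ≤ k → k ≤ hi → e j ≤ e k) (hd : 1 ≤ d)
    (ht : IsAlphaBlock e lo hi d t) (ht'' : IsAlphaBlock e lo hi (d - 1) t'')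
    (hk1 : lo ≤ k) (hk2 : k ≤ hi) : ∑ j ∈ Icc lo k, t j ≤ ∑ j ∈ Icc lo k, t'' j + 1 := by
  classical
  obtain ⟨hmono, hge, hsum, -⟩ := ht
  have hex : ∃ j, lo ≤ j ∧ j ≤ hi ∧ e j < t j := by
    by_contra! hno
    have : ∑ j ∈ Icc lo hi, t j ≤ ∑ j ∈ Icc lo hi, e j :=
      sum_le_sum fun j hj => hno j (mem_Icc.1 hj).1 (mem_Icc.1 hj).2
    omega
  obtain ⟨j₀, ⟨hj₀lo, hj₀hi, hj₀⟩, hfirst⟩ : ∃ j₀, (lo ≤ j₀ ∧ j₀ ≤ hi ∧ e j₀ < t j₀) ∧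
      ∀ j < j₀, ¬(lo ≤ j ∧ j ≤ hi ∧ e j < t j) :=
    ⟨Nat.find hex, Nat.find_spec hex, fun _ => Nat.find_min hex⟩
  have hmin (j : ℕ) (hj : j < j₀) (h1 : lo ≤ j) : t j = e j := by
    have := hfirst j hj
    have := hge j h1 (by omega)
    omega
  -- lowering the first entry that exceeds `e` keeps `t` admissible for `d - 1`
  set u := t - Pi.single j₀ 1
  have hu (j : ℕ) : u j = t j - if j = j₀ then 1 else 0 := by simp [u, Pi.single_apply]
  have hu_sum (k : ℕ) : ∑ j ∈ Icc lo k, u j =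
      ∑ j ∈ Icc lo k, t j - if j₀ ∈ Icc lo k then 1 else 0 := by
    simp only [u, Pi.sub_apply, sum_sub_distrib, sum_pi_single']
  refine le_trans ?_ (add_le_add_left
    (ht''.2.2.2 u (fun j k h1 h2 h3 => ?_) (fun j h1 h2 => ?_) ?_ k hk1 hk2) 1)
  · rw [hu_sum]
    split_ifs <;> omega
  · have := hmono j k h1 h2 h3
    rw [hu, hu]
    by_cases hjk : j < j₀ ∧ k = j₀
    · obtain ⟨hj, rfl⟩ := hjk
      have := hmin j hj h1
      have := he j k h1 h2 h3
      rw [if_neg hj.ne, if_pos rfl]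
      omega
    · split_ifs <;> omega
  · have := hge j h1 h2
    rw [hu]
    split_ifs with hj
    · subst hj; omega
    · omega
  · rw [hu_sum, if_pos (by simp only [mem_Icc]; omega), hsum]
    ring

end IsAlphaBlock

def shiftDelta (δ : ℕ → ℕ) (i0 : ℕ) : ℕ → ℕ :=
  fun j => if j = 1 then δ 1 + 1 else if j = i0 then δ i0 - 1 else δ j

lemma sum_shiftDelta_sub (δ : ℕ → ℕ) {i0 : ℕ} (hi0 : 2 ≤ i0) (hδ : 1 ≤ δ i0) (j : ℕ) :
    ∑ l ∈ Icc 1 j, ((shiftDelta δ i0 l : ℤ) - δ l) =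
      (if 1 ≤ j then 1 else 0) - (if i0 ≤ j then 1 else 0) := by
  have hterm (l : ℕ) : (shiftDelta δ i0 l : ℤ) - δ l =
      (if l = 1 then 1 else 0) - (if l = i0 then 1 else 0) := by
    unfold shiftDelta
    split_ifs <;> subst_vars <;> omega
  simp only [hterm, sum_sub_distrib, sum_ite_eq', mem_Icc]
  split_ifs <;> omega

section Blocks

variable {c : ℕ → ℕ} {n' r k : ℕ}

lemma lenP_succ (c : ℕ → ℕ) (k : ℕ) :
    lenP c (k + 1) = lenP c k + (c (2 * k + 1) - c (2 * k)) := by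
  rw [lenP, lenP, sum_Icc_succ_top (by omega)]
  congr 2

lemma lenQ_succ (c : ℕ → ℕ) (k : ℕ) :
    lenQ c (k + 1) = lenQ c k + (c (2 * k + 2) - c (2 * k + 1)) := by
  rw [lenQ, lenQ, sum_Icc_succ_top (by omega)]
  congr 2

lemma lenP_mono (c : ℕ → ℕ) : Monotone (lenP c) :=
  fun _ _ h => sum_le_sum_of_subset (Icc_subset_Icc_right h)

lemma lenQ_mono (c : ℕ → ℕ) : Monotone (lenQ c) :=
  fun _ _ h => sum_le_sum_of_subset (Icc_subset_Icc_right h)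

lemma c_mono (hc : ∀ i < 2 * r, c i < c (i + 1)) {i j : ℕ} (hij : i ≤ j) (hj : j ≤ 2 * r) :
    c i ≤ c j := by
  induction j, hij using Nat.le_induction with
  | base => rfl
  | succ j _ ih => exact (ih (by omega)).trans (hc j (by omega)).le

lemma c_two_mul (hc0 : c 0 = n') (hc : ∀ i < 2 * r, c i < c (i + 1)) (hk : k ≤ r) :
    c (2 * k) = n' + lenP c k + lenQ c k := by
  induction k with
  | zero => simp [hc0, lenP, lenQ]
  | succ k ih =>
    have h1 := hc (2 * k) (by omega)
    have h2 : c (2 * k + 1) < c (2 * k + 2) := hc (2 * k + 1) (by omega)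
    have := ih (by omega)
    rw [lenP_succ, lenQ_succ, show 2 * (k + 1) = 2 * k + 2 by ring]
    omega

lemma c_two_mul_sub_one (hc0 : c 0 = n') (hc : ∀ i < 2 * r, c i < c (i + 1))
    (hk1 : 1 ≤ k) (hk : k ≤ r) : c (2 * k - 1) = n' + lenP c k + lenQ c (k - 1) := by
  obtain ⟨k, rfl⟩ : ∃ j, k = j + 1 := ⟨k - 1, by omega⟩
  have := hc (2 * k) (by omega)
  have := c_two_mul hc0 hc (by omega : k ≤ r)
  rw [lenP_succ, show 2 * (k + 1) - 1 = 2 * k + 1 by omega, Nat.add_sub_cancel]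
  omega

lemma c_two_mul_sub_two (hc0 : c 0 = n') (hc : ∀ i < 2 * r, c i < c (i + 1)) (hk : k ≤ r) :
    c (2 * k - 2) = n' + lenP c (k - 1) + lenQ c (k - 1) := by
  rw [show 2 * k - 2 = 2 * (k - 1) by omega, c_two_mul hc0 hc (by omega)]

end Blocks

namespace PairData

variable {e : ℕ → ℤ} {m n : ℕ} {b a b'' a'' : ℕ → ℤ} {m' n' r : ℕ} {c : ℕ → ℕ}
  {δ δ'' : ℕ → ℕ} {αt βt αt'' βt'' : ℕ → ℕ → ℤ} {i k l w : ℕ}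

lemma one_le_r (h : PairData e m n b a m' n' r c δ αt βt) : 1 ≤ r := h.2.2.1

lemma c_zero (h : PairData e m n b a m' n' r c δ αt βt) : c 0 = n' := h.2.2.2.1

lemma c_lt_c_succ (h : PairData e m n b a m' n' r c δ αt βt) : ∀ i < 2 * r, c i < c (i + 1) :=
  h.2.2.2.2.2.1

lemma c_two_mul_r (h : PairData e m n b a m' n' r c δ αt βt) : c (2 * r) = m + n - m' :=
  h.2.2.2.2.1

lemma lenP_r (h : PairData e m n b a m' n' r c δ αt βt) : lenP c r = m - m' := h.2.2.2.2.2.2.1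

lemma lenQ_r (h : PairData e m n b a m' n' r c δ αt βt) : n' + lenQ c r = n := by
  have := c_two_mul h.c_zero h.c_lt_c_succ le_rfl
  have := h.lenP_r
  have := h.c_two_mul_r
  have := h.1
  omega

lemma alpha (h : PairData e m n b a m' n' r c δ αt βt) (hk1 : 1 ≤ k) (hk : k ≤ r) :
    IsAlphaBlock e (c (2 * k - 1) + 1) (c (2 * k)) (δ k) (αt k) :=
  h.2.2.2.2.2.2.2.2.1 k hk1 hk

lemma beta (h : PairData e m n b a m' n' r c δ αt βt) (hk1 : 1 ≤ k) (hk : k ≤ r) :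
    IsBetaBlock e (c (2 * k - 2) + 1) (c (2 * k - 1)) (δ k) (βt k) :=
  h.2.2.2.2.2.2.2.2.2.1 k hk1 hk

lemma a_eq_e (h : PairData e m n b a m' n' r c δ αt βt) (hi1 : 1 ≤ i) (hi : i ≤ n') : a i = e i :=
  h.2.2.2.2.2.2.2.2.2.2.1 i hi1 hi

lemma a_eq_alpha (h : PairData e m n b a m' n' r c δ αt βt) (hk1 : 1 ≤ k) (hk : k ≤ r)
    (hi1 : n' + lenQ c (k - 1) < i) (hi2 : i ≤ n' + lenQ c k) : a i = αt k (i + lenP c k) := by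
  have h1 := c_two_mul_sub_one h.c_zero h.c_lt_c_succ hk1 hk
  have h2 := c_two_mul h.c_zero h.c_lt_c_succ hk
  have : a (i + lenP c k - lenP c k) = αt k (i + lenP c k) :=
    h.2.2.2.2.2.2.2.2.2.2.2.1 k hk1 hk _ (by omega) (by omega)
  rwa [Nat.add_sub_cancel] at this

lemma b_eq_beta (h : PairData e m n b a m' n' r c δ αt βt) (hk1 : 1 ≤ k) (hk : k ≤ r)
    (hi1 : lenP c (k - 1) < i) (hi2 : i ≤ lenP c k) :
    b i = βt k (i + (n' + lenQ c (k - 1))) := by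
  have h1 := c_two_mul_sub_one h.c_zero h.c_lt_c_succ hk1 hk
  have h2 := c_two_mul_sub_two h.c_zero h.c_lt_c_succ hk
  have : b (i + (n' + lenQ c (k - 1)) - n' - lenQ c (k - 1)) = βt k (i + (n' + lenQ c (k - 1))) :=
    h.2.2.2.2.2.2.2.2.2.2.2.2.1 k hk1 hk _ (by omega) (by omega)
  rwa [show i + (n' + lenQ c (k - 1)) - n' - lenQ c (k - 1) = i by omega] at this

lemma b_eq_e (h : PairData e m n b a m' n' r c δ αt βt) (hi1 : m - m' < i) (hi : i ≤ m) :
    b i = e (n + i) := by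
  have := h.lenQ_r
  have := h.1
  have := h.2.2.2.2.2.2.2.2.2.2.2.2.2 (i - (m - m')) (by omega) (by omega)
  rwa [show m - m' + (i - (m - m')) = i by omega,
    show m + n - m' + (i - (m - m')) = n + i by omega] at this

lemma exists_mem_Q (h : PairData e m n b a m' n' r c δ αt βt) (hi1 : n' < i) (hi : i ≤ n) :
    ∃ k, 1 ≤ k ∧ k ≤ r ∧ n' + lenQ c (k - 1) < i ∧ i ≤ n' + lenQ c k :=
  exists_apply_sub_one_lt_le (n' + lenQ c ·)
    (by simpa only [lenQ, Icc_eq_empty_of_lt one_pos, sum_empty, add_zero] using hi1)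
    (by rw [h.lenQ_r]; exact hi)

lemma exists_mem_P (h : PairData e m n b a m' n' r c δ αt βt) (hi1 : 1 ≤ i) (hi : i ≤ m - m') :
    ∃ k, 1 ≤ k ∧ k ≤ r ∧ lenP c (k - 1) < i ∧ i ≤ lenP c k :=
  exists_apply_sub_one_lt_le (lenP c)
    (by simp only [lenP, Icc_eq_empty_of_lt one_pos, sum_empty]; omega)
    (by rw [h.lenP_r]; exact hi)

lemma sum_a_block (h : PairData e m n b a m' n' r c δ αt βt) (hk1 : 1 ≤ k) (hk : k ≤ r)
    (hw : w ≤ n' + lenQ c k) :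
    ∑ i ∈ Ioc (n' + lenQ c (k - 1)) w, a i = ∑ j ∈ Ioc (c (2 * k - 1)) (w + lenP c k), αt k j := by
  rw [c_two_mul_sub_one h.c_zero h.c_lt_c_succ hk1 hk, add_right_comm, ← sum_Ioc_add_right]
  exact sum_congr rfl fun i hi => h.a_eq_alpha hk1 hk (mem_Ioc.1 hi).1 ((mem_Ioc.1 hi).2.trans hw)

lemma sum_b_block (h : PairData e m n b a m' n' r c δ αt βt) (hk1 : 1 ≤ k) (hk : k ≤ r)
    (hw : w ≤ lenP c k) :
    ∑ i ∈ Ioc (lenP c (k - 1)) w, b i =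
      ∑ j ∈ Ioc (c (2 * k - 2)) (w + (n' + lenQ c (k - 1))), βt k j := by
  rw [c_two_mul_sub_two h.c_zero h.c_lt_c_succ hk,
    show n' + lenP c (k - 1) + lenQ c (k - 1) = lenP c (k - 1) + (n' + lenQ c (k - 1)) by ring,
    ← sum_Ioc_add_right]
  exact sum_congr rfl fun i hi => h.b_eq_beta hk1 hk (mem_Ioc.1 hi).1 ((mem_Ioc.1 hi).2.trans hw)

lemma sum_a_Q (h : PairData e m n b a m' n' r c δ αt βt) (hk1 : 1 ≤ k) (hk : k ≤ r) :
    ∑ i ∈ Ioc (n' + lenQ c (k - 1)) (n' + lenQ c k), a i =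
      ∑ j ∈ Ioc (c (2 * k - 1)) (c (2 * k)), e j + δ k := by
  have := (h.alpha hk1 hk).2.2.1
  rw [Icc_add_one_left_eq_Ioc] at this
  rw [h.sum_a_block hk1 hk le_rfl, ← add_right_comm, ← c_two_mul h.c_zero h.c_lt_c_succ hk, this]

lemma sum_b_P (h : PairData e m n b a m' n' r c δ αt βt) (hk1 : 1 ≤ k) (hk : k ≤ r) :
    ∑ i ∈ Ioc (lenP c (k - 1)) (lenP c k), b i =
      ∑ j ∈ Ioc (c (2 * k - 2)) (c (2 * k - 1)), e j - δ k := by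
  have := (h.beta hk1 hk).2.2.1
  rw [Icc_add_one_left_eq_Ioc] at this
  rw [h.sum_b_block hk1 hk le_rfl, ← this, c_two_mul_sub_one h.c_zero h.c_lt_c_succ hk1 hk]
  ring_nf

lemma sum_a_prefix (h : PairData e m n b a m' n' r c δ αt βt) (hk : k ≤ r) :
    ∑ i ∈ Ioc 0 (n' + lenQ c k), a i =
      ∑ j ∈ Ioc 0 n', e j + ∑ l ∈ Icc 1 k, (∑ j ∈ Ioc (c (2 * l - 1)) (c (2 * l)), e j + δ l) := by
  induction k with
  | zero =>
    simp only [lenQ, Icc_eq_empty_of_lt one_pos, sum_empty, add_zero]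
    exact sum_congr rfl fun i hi => h.a_eq_e (mem_Ioc.1 hi).1 (mem_Ioc.1 hi).2
  | succ k ih =>
    have hQ : n' + lenQ c k ≤ n' + lenQ c (k + 1) :=
      Nat.add_le_add_left (lenQ_mono c (Nat.le_add_right k 1)) n'
    rw [← sum_Ioc_consecutive _ (Nat.zero_le _) hQ, ih (by omega), sum_Icc_succ_top (by omega),
      ← h.sum_a_Q (by omega) hk, Nat.add_sub_cancel]
    ring

lemma sum_a_add_sum_b_prefix (h : PairData e m n b a m' n' r c δ αt βt) (hk : k ≤ r) :
    ∑ i ∈ Ioc 0 (n' + lenQ c k), a i + ∑ i ∈ Ioc 0 (lenP c k), b i =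
      ∑ j ∈ Ioc 0 (c (2 * k)), e j := by
  induction k with
  | zero =>
    simp only [lenQ, lenP, Icc_eq_empty_of_lt one_pos, sum_empty, add_zero, mul_zero, Ioc_self,
      h.c_zero]
    exact sum_congr rfl fun i hi => h.a_eq_e (mem_Ioc.1 hi).1 (mem_Ioc.1 hi).2
  | succ k ih =>
    have hP := h.sum_b_P (by omega) hk
    have hQ := h.sum_a_Q (by omega) hk
    simp only [Nat.add_sub_cancel, show 2 * (k + 1) - 2 = 2 * k by omega,
      show 2 * (k + 1) - 1 = 2 * k + 1 by omega] at hP hQ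
    have h1 := h.c_lt_c_succ (2 * k) (by omega)
    have h2 : c (2 * k + 1) < c (2 * k + 2) := h.c_lt_c_succ (2 * k + 1) (by omega)
    have hQk : n' + lenQ c k ≤ n' + lenQ c (k + 1) :=
      Nat.add_le_add_left (lenQ_mono c (Nat.le_add_right k 1)) n'
    rw [← sum_Ioc_consecutive _ (Nat.zero_le _) hQk,
      ← sum_Ioc_consecutive _ (Nat.zero_le _) (lenP_mono c (Nat.le_add_right k 1)), hP, hQ,
      show 2 * (k + 1) = 2 * k + 2 by ring,
      ← sum_Ioc_consecutive e (Nat.zero_le _) (h1.le.trans h2.le),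
      ← sum_Ioc_consecutive e h1.le h2.le,
      ← ih (by omega)]
    ring

lemma sum_a_add_sum_b (h : PairData e m n b a m' n' r c δ αt βt) :
    ∑ i ∈ Ioc 0 n, a i + ∑ i ∈ Ioc 0 m, b i = ∑ j ∈ Ioc 0 (m + n), e j := by
  have hm' : m' ≤ m := h.1
  have hhead := h.sum_a_add_sum_b_prefix le_rfl
  rw [h.lenQ_r, h.lenP_r, h.c_two_mul_r] at hhead
  have htail : ∑ i ∈ Ioc (m - m') m, b i = ∑ j ∈ Ioc (m + n - m') (m + n), e j := by
    rw [show m + n - m' = m - m' + n by omega, ← sum_Ioc_add_right]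
    exact sum_congr rfl fun i hi => by
      rw [h.b_eq_e (mem_Ioc.1 hi).1 (mem_Ioc.1 hi).2, add_comm]
  rw [← sum_Ioc_consecutive b (Nat.zero_le _) (Nat.sub_le m m'),
    ← sum_Ioc_consecutive e (Nat.zero_le _) (Nat.sub_le (m + n) m'), ← hhead, htail]
  ring

lemma degT_add (h : PairData e m n b a m' n' r c δ αt βt) :
    degT a n + degT b m = degT e (m + n) := by
  simp only [degT, Icc_one_eq_Ioc_zero]
  exact h.sum_a_add_sum_b

lemma e_le_a (he : Incr e (m + n)) (h : PairData e m n b a m' n' r c δ αt βt)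
    (hi1 : 1 ≤ i) (hi : i ≤ n) : e i ≤ a i := by
  rcases le_or_gt i n' with hi' | hi'
  · exact (h.a_eq_e hi1 hi').ge
  obtain ⟨k, hk1, hk, hik1, hik⟩ := h.exists_mem_Q hi' hi
  have h1 := c_two_mul_sub_one h.c_zero h.c_lt_c_succ hk1 hk
  have h2 := c_two_mul h.c_zero h.c_lt_c_succ hk
  have h3 := c_mono h.c_lt_c_succ (by omega : 2 * k ≤ 2 * r) le_rfl
  have h4 : c (2 * r) = m + n - m' := h.c_two_mul_r
  calc e i ≤ e (i + lenP c k) := he _ _ hi1 (by omega) (by omega)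
    _ ≤ αt k (i + lenP c k) := (h.alpha hk1 hk).2.1 _ (by omega) (by omega)
    _ = a i := (h.a_eq_alpha hk1 hk hik1 hik).symm

lemma b_le_e (he : Incr e (m + n)) (h : PairData e m n b a m' n' r c δ αt βt)
    (hi1 : 1 ≤ i) (hi : i ≤ m) : b i ≤ e (n + i) := by
  rcases le_or_gt i (m - m') with hi' | hi'
  · obtain ⟨k, hk1, hk, hik1, hik⟩ := h.exists_mem_P hi1 hi'
    have h1 := c_two_mul_sub_one h.c_zero h.c_lt_c_succ hk1 hk
    have h2 := c_two_mul_sub_two h.c_zero h.c_lt_c_succ hk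
    have h3 := lenQ_mono c (by omega : k - 1 ≤ r)
    have h4 := h.lenQ_r
    calc b i = βt k (i + (n' + lenQ c (k - 1))) := h.b_eq_beta hk1 hk hik1 hik
      _ ≤ e (i + (n' + lenQ c (k - 1))) := (h.beta hk1 hk).2.1 _ (by omega) (by omega)
      _ ≤ e (n + i) := he _ _ (by omega) (by omega) (by omega)
  · exact (h.b_eq_e hi' hi).le

lemma weaklyEligible (he : Incr e (m + n)) (h : PairData e m n b a m' n' r c δ αt βt) :
    WeaklyEligible b e a m n :=
  ⟨h.degT_add, fun _ => h.e_le_a he, fun _ => h.b_le_e he⟩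

lemma Sfun_tail_eq_zero (h : PairData e m n b a m' n' r c δ αt βt) {μ : ℕ} (hμ1 : m - m' < μ) :
    Sfun b e a m n μ (n + 1) = 0 := by
  have htail : ∑ i ∈ Icc μ m, b i = ∑ j ∈ Icc (μ + n) (m + n), e j := by
    rw [← map_add_right_Icc, sum_map]
    exact sum_congr rfl fun i hi => by
      rw [h.b_eq_e (by have := (mem_Icc.1 hi).1; omega) (mem_Icc.1 hi).2, add_comm]; rfl
  rw [Sfun, Icc_eq_empty (by omega), sum_empty, show μ + (n + 1) - 1 = μ + n by omega, htail]
  ring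

lemma Sfun_nonneg (h : PairData e m n b a m' n' r c δ αt βt) {μ : ℕ} (hk1 : 1 ≤ k) (hk : k ≤ r)
    (hμ1 : lenP c (k - 1) < μ) (hμ : μ ≤ lenP c k) :
    0 ≤ Sfun b e a m n μ (n' + lenQ c (k - 1) + 1) := by
  have hPk := lenP_mono c hk
  have hQk := lenQ_mono c (by omega : k - 1 ≤ r)
  have := h.lenP_r
  have := h.lenQ_r
  have hc := c_two_mul_sub_two h.c_zero h.c_lt_c_succ hk
  rw [Sfun_eq_sub h.sum_a_add_sum_b (by omega) (by omega) (by omega) (by omega), Nat.add_sub_cancel,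
    ← sum_Ioc_consecutive b (Nat.zero_le _) (by omega : lenP c (k - 1) ≤ μ - 1),
    h.sum_b_block hk1 hk (by omega),
    ← sum_Ioc_consecutive e (Nat.zero_le _)
      (by omega : c (2 * k - 2) ≤ μ - 1 + (n' + lenQ c (k - 1)))]
  have hpre := h.sum_a_add_sum_b_prefix (by omega : k - 1 ≤ r)
  rw [show 2 * (k - 1) = 2 * k - 2 by omega] at hpre
  have hβ : ∑ j ∈ Ioc (c (2 * k - 2)) (μ - 1 + (n' + lenQ c (k - 1))), βt k j ≤
      ∑ j ∈ Ioc (c (2 * k - 2)) (μ - 1 + (n' + lenQ c (k - 1))), e j :=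
    sum_le_sum fun j hj => (h.beta hk1 hk).2.1 j (by have := (mem_Ioc.1 hj).1; omega)
      (by have := (mem_Ioc.1 hj).2; have := c_two_mul_sub_one h.c_zero h.c_lt_c_succ hk1 hk; omega)
  linarith

lemma Afun_nonneg (he : Incr e (m + n)) (h : PairData e m n b a m' n' r c δ αt βt) {μ ν : ℕ}
    (hk1 : 1 ≤ k) (hμ : μ ≤ lenP c k) (hν1 : n' + lenQ c (k - 1) < ν) (hν : ν ≤ n) :
    0 ≤ Afun e a μ ν := by
  obtain ⟨l, hl1, hl, hνl1, hνl⟩ := h.exists_mem_Q (by omega) hν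
  have hkl : k ≤ l := by
    by_contra! hlk
    have := lenQ_mono c (by omega : l ≤ k - 1)
    omega
  have h1 := c_two_mul_sub_one h.c_zero h.c_lt_c_succ hl1 hl
  have h2 := c_two_mul h.c_zero h.c_lt_c_succ hl
  have h3 := c_mono h.c_lt_c_succ (by omega : 2 * l ≤ 2 * r) le_rfl
  have h4 : c (2 * r) = m + n - m' := h.c_two_mul_r
  have h5 := lenP_mono c hkl
  rw [Afun, h.a_eq_alpha hl1 hl hνl1 hνl, sub_nonneg]
  calc e (μ + ν) ≤ e (ν + lenP c l) := he _ _ (by omega) (by omega) (by omega)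
    _ ≤ αt l (ν + lenP c l) := (h.alpha hl1 hl).2.1 _ (by omega) (by omega)

lemma Bfun_nonneg (he : Incr e (m + n)) (h : PairData e m n b a m' n' r c δ αt βt) {μ ν : ℕ}
    (hk1 : 1 ≤ k) (hk : k ≤ r) (hμ1 : lenP c (k - 1) < μ) (hμ : μ ≤ lenP c k)
    (hν1 : n' + lenQ c (k - 1) < ν) (hν : ν ≤ n) : 0 ≤ Bfun b e μ ν := by
  have h1 := c_two_mul_sub_one h.c_zero h.c_lt_c_succ hk1 hk
  have h2 := c_two_mul_sub_two h.c_zero h.c_lt_c_succ hk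
  have h3 := lenP_mono c hk
  have h4 := h.lenP_r
  rw [Bfun, h.b_eq_beta hk1 hk hμ1 hμ, sub_nonneg]
  calc βt k (μ + (n' + lenQ c (k - 1))) ≤ e (μ + (n' + lenQ c (k - 1))) :=
        (h.beta hk1 hk).2.1 _ (by omega) (by omega)
    _ ≤ e (μ + ν - 1) := he _ _ (by omega) (by omega) (by omega)

lemma realizCrit (he : Incr e (m + n)) (h : PairData e m n b a m' n' r c δ αt βt) :
    RealizCrit b e a m n := by
  refine ⟨h.weaklyEligible he, fun μ ν hμ1 hμ hν1 hν hh => ?_⟩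
  rcases le_or_gt μ (m - m') with hμ' | hμ'
  · obtain ⟨k, hk1, hk, hμk1, hμk⟩ := h.exists_mem_P hμ1 hμ'
    have hνk : n' + lenQ c (k - 1) < ν := by
      by_contra! hνk
      exact hh.not_gt (lt_hfun_of_Sfun_nonneg (Nat.lt_succ_of_le hνk)
        (by have := lenQ_mono c (by omega : k - 1 ≤ r); have := h.lenQ_r; omega)
        (h.Sfun_nonneg hk1 hk hμk1 hμk))
    exact ⟨h.Afun_nonneg he hk1 hμk hνk hν, h.Bfun_nonneg he hk1 hk hμk1 hμk hνk hν⟩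
  · exact absurd hh (lt_hfun_of_Sfun_nonneg (Nat.lt_succ_of_le hν) le_rfl
      (h.Sfun_tail_eq_zero hμ').ge).not_ge

lemma moreBal (h : PairData e m n b a m' n' r c δ αt βt)
    (h'' : PairData e m n b'' a'' m' n' r c δ'' αt'' βt'')
    (hblock : ∀ l, 1 ≤ l → l ≤ r → ∀ k, c (2 * l - 1) < k → k ≤ c (2 * l) →
      ∑ j ∈ Ioc (c (2 * l - 1)) k, αt l j ≤
        ∑ j ∈ Ioc (c (2 * l - 1)) k, αt'' l j + ∑ l' ∈ Icc 1 (l - 1), ((δ'' l' : ℤ) - δ l')) :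
    MoreBal a'' a n := by
  intro k hk
  rw [Icc_one_eq_Ioc_zero]
  rcases le_or_gt k n' with hk' | hk'
  · exact (sum_congr rfl fun i hi => by
      rw [h.a_eq_e (mem_Ioc.1 hi).1 ((mem_Ioc.1 hi).2.trans hk'),
        h''.a_eq_e (mem_Ioc.1 hi).1 ((mem_Ioc.1 hi).2.trans hk')]).le
  obtain ⟨l, hl1, hl, hkl1, hkl⟩ := h.exists_mem_Q hk' hk
  have h1 := c_two_mul_sub_one h.c_zero h.c_lt_c_succ hl1 hl
  have h2 := c_two_mul h.c_zero h.c_lt_c_succ hl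
  have hpre := h.sum_a_prefix (by omega : l - 1 ≤ r)
  have hpre'' := h''.sum_a_prefix (by omega : l - 1 ≤ r)
  rw [← sum_Ioc_consecutive a (Nat.zero_le _) hkl1.le,
    ← sum_Ioc_consecutive a'' (Nat.zero_le _) hkl1.le,
    h.sum_a_block hl1 hl hkl, h''.sum_a_block hl1 hl hkl]
  have := hblock l hl1 hl (k + lenP c l) (by omega) (by omega)
  rw [sum_sub_distrib] at this
  rw [sum_add_distrib] at hpre hpre''
  linarith

lemma exists_ne_of_ne (h : PairData e m n b a m' n' r c δ αt βt)
    (h'' : PairData e m n b'' a'' m' n' r c δ'' αt'' βt'') (hl1 : 1 ≤ l) (hl : l ≤ r)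
    (hδ : δ'' l ≠ δ l) : ∃ i, 1 ≤ i ∧ i ≤ n ∧ a'' i ≠ a i := by
  by_contra! hall
  have hQ := lenQ_mono c hl
  have := h.lenQ_r
  have hsum : ∑ i ∈ Ioc (n' + lenQ c (l - 1)) (n' + lenQ c l), a'' i =
      ∑ i ∈ Ioc (n' + lenQ c (l - 1)) (n' + lenQ c l), a i :=
    sum_congr rfl fun i hi => hall i (by have := (mem_Ioc.1 hi).1; omega)
      (by have := (mem_Ioc.1 hi).2; omega)
  rw [h.sum_a_Q hl1 hl, h''.sum_a_Q hl1 hl] at hsum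
  omega

lemma moreBal_shiftDelta {i0 : ℕ} (he : Incr e (m + n))
    (h : PairData e m n b a m' n' r c δ αt βt)
    (h'' : PairData e m n b'' a'' m' n' r c (shiftDelta δ i0) αt'' βt'')
    (hi0 : 2 ≤ i0) (hδ : 1 ≤ δ i0) : MoreBal a'' a n := by
  refine h.moreBal h'' fun l hl1 hl k hk1 hk2 => ?_
  have hcl := c_mono h.c_lt_c_succ (by omega : 2 * l ≤ 2 * r) le_rfl
  have hcr : c (2 * r) = m + n - m' := h.c_two_mul_r
  have he' (j k : ℕ) (h1 : c (2 * l - 1) + 1 ≤ j) (h2 : j ≤ k) (h3 : k ≤ c (2 * l)) : e j ≤ e k :=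
    he j k (by omega) h2 (by omega)
  have hα := h.alpha hl1 hl
  have hα'' := h''.alpha hl1 hl
  rw [sum_shiftDelta_sub δ hi0 hδ, ← Icc_add_one_left_eq_Ioc]
  by_cases hli0 : l = i0
  · subst hli0
    have hval : (shiftDelta δ l l : ℤ) = δ l - 1 := by
      simp only [shiftDelta, if_neg (by omega : l ≠ 1), if_true]
      omega
    rw [hval] at hα''
    have := hα.sum_Icc_le_add_one_of_pred he' (by omega) hα'' hk1 hk2
    rw [if_pos (by omega), if_neg (by omega)]
    linarith
  by_cases hl1' : l = 1
  · subst hl1'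
    have hval : (shiftDelta δ i0 1 : ℤ) = δ 1 + 1 := by simp [shiftDelta]
    rw [hval] at hα''
    have := hα.sum_Icc_le_of_succ hα'' hk1 hk2
    rw [if_neg (by omega), if_neg (by omega)]
    linarith
  have hval : shiftDelta δ i0 l = δ l := by simp [shiftDelta, hli0, hl1']
  rw [hval] at hα''
  have := hα''.2.2.2 _ hα.1 hα.2.1 hα.2.2.1 k hk1 hk2
  split_ifs <;> omega

end PairData

theorem stmt16_general (m n : ℕ)
    (e b a : ℕ → ℤ) (he : Incr e (m + n))
    (m' n' r : ℕ) (c : ℕ → ℕ) (δ : ℕ → ℕ) (αt βt : ℕ → ℕ → ℤ)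
    (hpair : PairData e m n b a m' n' r c δ αt βt)
    (i0 : ℕ) (hi01 : 2 ≤ i0) (hδ : 1 ≤ δ i0)
    (b'' a'' : ℕ → ℤ)
    (αt'' βt'' : ℕ → ℕ → ℤ)
    (hpair'' : PairData e m n b'' a'' m' n' r c
      (fun j => if j = 1 then δ 1 + 1 else if j = i0 then δ i0 - 1 else δ j)
      αt'' βt'') :
    RealizCrit b'' e a'' m n ∧ StrictMoreBal a'' a n :=
  ⟨hpair''.realizCrit he, hpair.moreBal_shiftDelta he hpair'' hi01 hδ,
    hpair.exists_ne_of_ne hpair'' le_rfl hpair.one_le_r (by simp)⟩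

/-- Lemma: if `(b,a) = Pair(m',n',Λ,δ)` is combinatorially stable and
`δ_i > 0` for some `i > 1`, then the pair
`(b'',a'') = Pair(m',n',Λ,δ'')` with `δ'' = (δ_1+1, …, δ_i−1, …, δ_r)` is
realizable and `a'' > a`. -/
theorem stmt16 (m n : ℕ) (hm : 1 ≤ m) (hn : 1 ≤ n)
    (e b a : ℕ → ℤ) (he : Incr e (m + n)) (hb : Incr b m) (ha : Incr a n)
    (m' n' r : ℕ) (c : ℕ → ℕ) (δ : ℕ → ℕ) (αt βt : ℕ → ℕ → ℤ)
    (hpair : PairData e m n b a m' n' r c δ αt βt)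
    (hbounds : DeltaBounds e m' n' r c δ)
    (i0 : ℕ) (hi01 : 2 ≤ i0) (hi0r : i0 ≤ r) (hδ : 1 ≤ δ i0)
    (b'' a'' : ℕ → ℤ) (hb'' : Incr b'' m) (ha'' : Incr a'' n)
    (αt'' βt'' : ℕ → ℕ → ℤ)
    (hpair'' : PairData e m n b'' a'' m' n' r c
      (fun j => if j = 1 then δ 1 + 1 else if j = i0 then δ i0 - 1 else δ j)
      αt'' βt'') :
    RealizCrit b'' e a'' m n ∧ StrictMoreBal a'' a n :=
  stmt16_general m n e b a he m' n' r c δ αt βt hpair i0 hi01 hδ b'' a'' αt'' βt'' hpair''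
end

section
/- Let (b,e,a) be a weakly eligible triple of splitting types of ranks m, m+n, n. Let n' = max{ν ≥ 0 : a_i = e_i for all i ≤ ν}. Then h_1 = n' + 1, and for every 1 ≤ μ ≤ m, h_μ = n + 1 if and only if b_i = e_{n+i} for all μ ≤ i ≤ m. -/
open Finset

lemma splitSum (f : ℕ → ℤ) (ν N : ℕ) (h1 : 1 ≤ ν) (h2 : ν ≤ N + 1) :
    ∑ i ∈ Icc 1 N, f i = (∑ i ∈ Icc 1 (ν - 1), f i) + ∑ i ∈ Icc ν N, f i := by
  have e1 : Icc 1 N = Ico 1 (N + 1) := by rw [Finset.Ico_add_one_right_eq_Icc]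
  have e2 : Icc 1 (ν - 1) = Ico 1 ν := by
    rw [← Finset.Ico_add_one_right_eq_Icc]; congr 1; omega
  have e3 : Icc ν N = Ico ν (N + 1) := by rw [Finset.Ico_add_one_right_eq_Icc]
  rw [e1, e2, e3, ← Finset.sum_Ico_consecutive f h1 h2]

lemma S1_eq (m n : ℕ) (b e a : ℕ → ℤ)
    (hdeg : degT a n + degT b m = degT e (m + n)) (ν : ℕ) (h1 : 1 ≤ ν) (h2 : ν ≤ n + 1) :
    Sfun b e a m n 1 ν = ∑ i ∈ Icc 1 (ν - 1), (e i - a i) := by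
  have ha := splitSum a ν n h1 h2
  have he := splitSum e ν (m + n) h1 (by omega)
  unfold degT at hdeg
  unfold Sfun
  rw [show 1 + ν - 1 = ν from by omega, Finset.sum_sub_distrib]
  linarith

lemma Stop_eq (m n : ℕ) (b e a : ℕ → ℤ) (μ : ℕ) (h1 : 1 ≤ μ) :
    Sfun b e a m n μ (n + 1) = ∑ i ∈ Icc μ m, (b i - e (n + i)) := by
  unfold Sfun
  rw [show μ + (n + 1) - 1 = n + μ from by omega]
  have h0 : Icc (n + 1) n = (∅ : Finset ℕ) := by
    rw [Finset.Icc_eq_empty]; omega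
  have hre : ∑ i ∈ Icc (n + μ) (m + n), e i = ∑ i ∈ Icc μ m, e (n + i) := by
    have hmap : Icc (n + μ) (m + n) = (Icc μ m).map (addLeftEmbedding n) := by
      rw [Finset.map_add_left_Icc]; congr 1; omega
    rw [hmap, Finset.sum_map]
    simp [addLeftEmbedding_apply]
  rw [h0, hre, Finset.sum_sub_distrib]
  simp

lemma hfun_eq_of (b e a : ℕ → ℤ) (m n μ k : ℕ)
    (hk : 1 ≤ k ∧ k ≤ n + 1 ∧ ∀ ν', k < ν' → ν' ≤ n + 1 → Sfun b e a m n μ ν' < 0)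
    (hlow : ∀ j, (1 ≤ j ∧ j ≤ n + 1 ∧ ∀ ν', j < ν' → ν' ≤ n + 1 → Sfun b e a m n μ ν' < 0) →
      k ≤ j) :
    hfun b e a m n μ = k := by
  unfold hfun
  exact le_antisymm (Nat.sInf_le hk) (le_csInf ⟨k, hk⟩ hlow)

/-- For a weakly eligible triple: `h_1 = n' + 1` where
`n' = max{ν : a_i = e_i for all i ≤ ν}`, and `h_μ = n+1` iff `b_i = e_{n+i}`
for all `μ ≤ i ≤ m`. -/
theorem stmt18 (m n : ℕ) (hm : 1 ≤ m) (hn : 1 ≤ n)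
    (b e a : ℕ → ℤ) (hb : Incr b m) (he : Incr e (m + n)) (ha : Incr a n)
    (hwe : WeaklyEligible b e a m n)
    (n' : ℕ) (hn'n : n' ≤ n)
    (hn'eq : ∀ i, 1 ≤ i → i ≤ n' → a i = e i)
    (hn'max : ∀ ν, ν ≤ n → (∀ i, 1 ≤ i → i ≤ ν → a i = e i) → ν ≤ n') :
    hfun b e a m n 1 = n' + 1 ∧
    ∀ μ, 1 ≤ μ → μ ≤ m →
      (hfun b e a m n μ = n + 1 ↔ ∀ i, μ ≤ i → i ≤ m → b i = e (n + i)) := by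
  obtain ⟨hdeg, hea, hbe⟩ := hwe
  constructor
  · -- h_1 = n' + 1
    apply hfun_eq_of
    · refine ⟨by omega, by omega, fun ν' hlt hle => ?_⟩
      rw [S1_eq m n b e a hdeg ν' (by omega) hle]
      have hn1n : n' + 1 ≤ n := by omega
      have hne : a (n' + 1) ≠ e (n' + 1) := by
        intro hq
        have := hn'max (n' + 1) hn1n (fun i hi1 hi2 => by
          rcases Nat.lt_or_ge i (n' + 1) with h | h
          · exact hn'eq i hi1 (by omega)
          · have hi : i = n' + 1 := by omega
            rw [hi]; exact hq)
        omega
      have hkey : ∑ i ∈ Icc 1 (ν' - 1), (e i - a i) < ∑ i ∈ Icc 1 (ν' - 1), (0 : ℤ) := by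
        apply Finset.sum_lt_sum
        · intro i hi
          simp only [Finset.mem_Icc] at hi
          have := hea i hi.1 (by omega)
          linarith
        · refine ⟨n' + 1, by simp only [Finset.mem_Icc]; omega, ?_⟩
          have := hea (n' + 1) (by omega) hn1n
          have : e (n' + 1) < a (n' + 1) := lt_of_le_of_ne this (fun h => hne h.symm)
          linarith
      simpa using hkey
    · rintro j ⟨hj1, hj2, hjS⟩
      by_contra hcon
      have hj : j < n' + 1 := by omega
      have hS := hjS (n' + 1) (by omega) (by omega)
      rw [S1_eq m n b e a hdeg (n' + 1) (by omega) (by omega)] at hS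
      have hz : ∑ i ∈ Icc 1 (n' + 1 - 1), (e i - a i) = 0 := by
        apply Finset.sum_eq_zero
        intro i hi
        simp only [Finset.mem_Icc] at hi
        rw [hn'eq i hi.1 (by omega)]
        ring
      omega
  · -- part 2
    intro μ hμ1 hμm
    constructor
    · intro hμeq i hi1 hi2
      by_contra hne
      have hlt : b i < e (n + i) := lt_of_le_of_ne (hbe i (by omega) hi2) hne
      have hS : Sfun b e a m n μ (n + 1) < 0 := by
        rw [Stop_eq m n b e a μ hμ1]
        have hkey : ∑ j ∈ Icc μ m, (b j - e (n + j)) < ∑ j ∈ Icc μ m, (0 : ℤ) := by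
          apply Finset.sum_lt_sum
          · intro j hj
            simp only [Finset.mem_Icc] at hj
            have := hbe j (by omega) hj.2
            linarith
          · exact ⟨i, by simp only [Finset.mem_Icc]; omega, by linarith⟩
        simpa using hkey
      have hle : hfun b e a m n μ ≤ n := by
        apply Nat.sInf_le
        refine ⟨hn, by omega, fun ν' hlt' hle' => ?_⟩
        have : ν' = n + 1 := by omega
        rw [this]; exact hS
      omega
    · intro hbeq
      apply hfun_eq_of
      · exact ⟨by omega, le_refl _, fun ν' h h' => absurd h' (by omega)⟩
      · rintro j ⟨hj1, hj2, hjS⟩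
        by_contra hcon
        have hS := hjS (n + 1) (by omega) (le_refl _)
        rw [Stop_eq m n b e a μ hμ1] at hS
        have hz : ∑ i ∈ Icc μ m, (b i - e (n + i)) = 0 := by
          apply Finset.sum_eq_zero
          intro i hi
          simp only [Finset.mem_Icc] at hi
          rw [hbeq i hi.1 hi.2]
          ring
        omega
end
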